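/- Energy-dissipation identity for the flattened linearized problem: if (v, q, ζ) solve ∂_t v + s∂₁v + s'v₃e₁ + div S(q,v) = Θ¹ in Ω, div v = Θ² in Ω, S(q,v)e₃ = (ζ − σΔζ)e₃ − γζe₁ + Θ³ on Σ, ∂_t ζ = v₃ − (γ/2)∂₁ζ + Θ⁴ on Σ, and v = 0 on Σ_b, then d/dt [∫_Ω ½|v|² + ∫_Σ ½|ζ|² + (σ/2)|∇ζ|²] + ∫_Ω ½|𝔻v|² = ∫_Ω γx₃v₃v₁ + ∫_Σ γζv₁ + ∫_Ω (v·Θ¹ + qΘ²) + ∫_Σ (−Θ³·v + (ζ − σΔζ)Θ⁴). -/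

import Mathlib

open MeasureTheory Set

/-- Partial derivatives on `(ℝ×ℝ)×ℝ` in the three coordinate directions. -/
noncomputable def pd3 (k : Fin 3) (f : (ℝ × ℝ) × ℝ → ℝ) (p : (ℝ × ℝ) × ℝ) : ℝ :=
  fderiv ℝ f p (if k = 0 then ((1, 0), 0) else if k = 1 then ((0, 1), 0) else ((0, 0), 1))

/-- Partial derivatives on the horizontal cross-section `ℝ×ℝ`. -/
noncomputable def pd2 (k : Fin 2) (f : ℝ × ℝ → ℝ) (x : ℝ × ℝ) : ℝ :=
  fderiv ℝ f x (if k = 0 then (1, 0) else (0, 1))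

/-- Symmetric gradient `(𝔻v)_{ij} = ∂ᵢv_j + ∂_jv_i`. -/
noncomputable def symGrad (v : (ℝ × ℝ) × ℝ → Fin 3 → ℝ) (i j : Fin 3)
    (p : (ℝ × ℝ) × ℝ) : ℝ :=
  pd3 i (fun y => v y j) p + pd3 j (fun y => v y i) p

/-- Stress tensor `S(q,v) = qI − 𝔻v`. -/
noncomputable def stress (q : (ℝ × ℝ) × ℝ → ℝ) (v : (ℝ × ℝ) × ℝ → Fin 3 → ℝ)
    (i j : Fin 3) (p : (ℝ × ℝ) × ℝ) : ℝ :=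
  (if i = j then q p else 0) - symGrad v i j p

/-- Horizontal Laplacian on `Σ`. -/
noncomputable def lap2 (ζ : ℝ × ℝ → ℝ) (x : ℝ × ℝ) : ℝ :=
  pd2 0 (pd2 0 ζ) x + pd2 1 (pd2 1 ζ) x


section helpers
variable {X Y : Type*} [NormedAddCommGroup X] [NormedSpace ℝ X]
  [NormedAddCommGroup Y] [NormedSpace ℝ Y]

theorem fdapply_mul {f g : X → ℝ} {x : X} (hf : DifferentiableAt ℝ f x)
    (hg : DifferentiableAt ℝ g x) (w : X) :
    fderiv ℝ (fun y => f y * g y) x w = fderiv ℝ f x w * g x + f x * fderiv ℝ g x w := by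
  rw [fderiv_fun_mul hf hg]; simp; ring

theorem fdapply_add {f g : X → ℝ} {x : X} (hf : DifferentiableAt ℝ f x)
    (hg : DifferentiableAt ℝ g x) (w : X) :
    fderiv ℝ (fun y => f y + g y) x w = fderiv ℝ f x w + fderiv ℝ g x w := by
  rw [fderiv_fun_add hf hg]; simp

theorem fdapply_sum {ι : Type*} {u : Finset ι} {A : ι → X → ℝ} {x : X}
    (h : ∀ i ∈ u, DifferentiableAt ℝ (A i) x) (w : X) :
    fderiv ℝ (fun y => ∑ i ∈ u, A i y) x w = ∑ i ∈ u, fderiv ℝ (A i) x w := by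
  rw [fderiv_fun_sum h]; simp

theorem fdapply_const_mul {f : X → ℝ} {x : X} (hf : DifferentiableAt ℝ f x) (c : ℝ) (w : X) :
    fderiv ℝ (fun y => c * f y) x w = c * fderiv ℝ f x w := by
  rw [fderiv_const_mul hf c]; simp

theorem fdapply_sq {f : X → ℝ} {x : X} (hf : DifferentiableAt ℝ f x) (w : X) :
    fderiv ℝ (fun y => (f y) ^ 2) x w = 2 * f x * fderiv ℝ f x w := by
  have : (fun y => (f y) ^ 2) = fun y => f y * f y := by funext y; ring
  rw [this, fdapply_mul hf hf]; ring

/-- slice in the first (scalar) coordinate -/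
theorem hasDerivAt_slice_left (F : ℝ × X → ℝ) {t : ℝ} {x : X}
    (hF : DifferentiableAt ℝ F (t, x)) :
    HasDerivAt (fun τ => F (τ, x)) (fderiv ℝ F (t, x) (1, 0)) t := by
  have h := hF.hasFDerivAt.comp t (HasFDerivAt.prodMk (hasFDerivAt_id (𝕜 := ℝ) t) (hasFDerivAt_const x t))
  have := h.hasDerivAt
  simpa [Function.comp_def] using this

theorem hasDerivAt_slice_right (F : X × ℝ → ℝ) {x : X} {u : ℝ}
    (hF : DifferentiableAt ℝ F (x, u)) :
    HasDerivAt (fun w => F (x, w)) (fderiv ℝ F (x, u) (0, 1)) u := by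
  have h := hF.hasFDerivAt.comp u (HasFDerivAt.prodMk (hasFDerivAt_const x u) (hasFDerivAt_id u))
  have := h.hasDerivAt
  simpa [Function.comp_def] using this

theorem fdapply_slice_left (F : X × Y → ℝ) {x : X} {c : Y}
    (hF : DifferentiableAt ℝ F (x, c)) (w : X) :
    fderiv ℝ (fun y => F (y, c)) x w = fderiv ℝ F (x, c) (w, 0) := by
  have h := hF.hasFDerivAt.comp x (HasFDerivAt.prodMk (hasFDerivAt_id (𝕜 := ℝ) x) (hasFDerivAt_const c x))
  have e : fderiv ℝ (fun y => F (y, c)) x = fderiv ℝ (F ∘ fun x => (id x, c)) x := rfl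
  rw [e, h.fderiv]; simp

theorem fdapply_slice_right (F : Y × X → ℝ) {c : Y} {x : X}
    (hF : DifferentiableAt ℝ F (c, x)) (w : X) :
    fderiv ℝ (fun y => F (c, y)) x w = fderiv ℝ F (c, x) (0, w) := by
  have h := hF.hasFDerivAt.comp x (HasFDerivAt.prodMk (hasFDerivAt_const c x) (hasFDerivAt_id x))
  have e : fderiv ℝ (fun y => F (c, y)) x = fderiv ℝ (F ∘ Prod.mk c) x := rfl
  rw [e, h.fderiv]; simp

/-- Clairaut / symmetry of second derivatives, in applied form. -/
theorem fdapply_symm {f : X → ℝ} (hf : ContDiff ℝ (⊤ : ℕ∞) f) (x v w : X) :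
    fderiv ℝ (fun y => fderiv ℝ f y v) x w = fderiv ℝ (fun y => fderiv ℝ f y w) x v := by
  have hd : Differentiable ℝ f := hf.differentiable (by norm_num)
  have h1 : ContDiff ℝ (⊤ : ℕ∞) (fderiv ℝ f) := (contDiff_infty_iff_fderiv.mp hf).2
  have h2 : DifferentiableAt ℝ (fderiv ℝ f) x := h1.differentiable (by norm_num) x
  have hsymm := second_derivative_symmetric (f' := fderiv ℝ f)
    (fun y => (hd y).hasFDerivAt) h2.hasFDerivAt v w
  have e1 : fderiv ℝ (fun y => fderiv ℝ f y v) x w = (fderiv ℝ (fderiv ℝ f) x w) v := by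
    rw [fderiv_clm_apply h2 (differentiableAt_const v)]; simp
  have e2 : fderiv ℝ (fun y => fderiv ℝ f y w) x v = (fderiv ℝ (fderiv ℝ f) x v) w := by
    rw [fderiv_clm_apply h2 (differentiableAt_const w)]; simp
  rw [e1, e2, hsymm]

/-- translation invariance of `fderiv` for periodic functions -/
theorem fdapply_periodic {f : X → ℝ} (hf : Differentiable ℝ f) (e : X)
    (hper : ∀ x, f (x + e) = f x) (x : X) (w : X) :
    fderiv ℝ f (x + e) w = fderiv ℝ f x w := by
  have h : HasFDerivAt (fun y => f (y + e))
      ((fderiv ℝ f (x + e)).comp (ContinuousLinearMap.id ℝ X)) x := by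
    have := (hf (x + e)).hasFDerivAt.comp x ((hasFDerivAt_id x).add_const e)
    simpa [Function.comp_def] using this
  rw [funext hper] at h
  rw [h.fderiv]; simp

end helpers

section integration
open MeasureTheory Set

theorem integral_Ioc_hasDerivAt {f f' : ℝ → ℝ} (hf : ∀ x, HasDerivAt f (f' x) x)
    (hf' : Continuous f') {a b : ℝ} (hab : a ≤ b) :
    ∫ x in Ioc a b, f' x = f b - f a := by
  rw [← intervalIntegral.integral_of_le hab]
  exact intervalIntegral.integral_eq_sub_of_hasDerivAt (fun x _ => hf x)
    (hf'.intervalIntegrable a b)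

variable {α β : Type*} [MeasureSpace α] [MeasureSpace β]
  [SigmaFinite (volume : Measure α)] [SigmaFinite (volume : Measure β)]

theorem setIntegral_prod_symm' (f : α × β → ℝ) {s : Set α} {t : Set β}
    (hf : IntegrableOn f (s ×ˢ t)) :
    ∫ z in s ×ˢ t, f z = ∫ y in t, ∫ x in s, f (x, y) := by
  have h1 : (volume : Measure (α × β)).restrict (s ×ˢ t)
      = ((volume : Measure α).restrict s).prod ((volume : Measure β).restrict t) :=
    (Measure.prod_restrict s t).symm
  rw [show (∫ z in s ×ˢ t, f z) = ∫ z, f z ∂((volume : Measure (α × β)).restrict (s ×ˢ t)) from rfl,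
    h1]
  exact integral_prod_symm f (by rw [Measure.prod_restrict]; exact hf)

theorem setIntegral_prod' (f : α × β → ℝ) {s : Set α} {t : Set β}
    (hf : IntegrableOn f (s ×ˢ t)) :
    ∫ z in s ×ˢ t, f z = ∫ x in s, ∫ y in t, f (x, y) :=
  MeasureTheory.setIntegral_prod f hf

end integration

section diffint
open MeasureTheory Set Metric

theorem hasDerivAt_setIntegral {X : Type*} [NormedAddCommGroup X] [NormedSpace ℝ X]
    [MeasureSpace X] [OpensMeasurableSpace X] [SecondCountableTopology X]
    [IsFiniteMeasureOnCompacts (volume : Measure X)] [T2Space X]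
    {S K : Set X} (hK : IsCompact K) (hSK : S ⊆ K) (hSm : MeasurableSet S)
    {G : ℝ × X → ℝ} (hG : ContDiff ℝ (⊤ : ℕ∞) G) (t : ℝ) :
    HasDerivAt (fun τ => ∫ x in S, G (τ, x)) (∫ x in S, fderiv ℝ G (t, x) (1, 0)) t := by
  have hGd : Differentiable ℝ G := hG.differentiable (by norm_num)
  have cG' : Continuous fun z : ℝ × X => fderiv ℝ G z (1, 0) :=
    (hG.continuous_fderiv (by norm_num)).clm_apply continuous_const
  have hK' : IsCompact (Icc (t - 1) (t + 1) ×ˢ K) := isCompact_Icc.prod hK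
  obtain ⟨C, hC⟩ := hK'.exists_bound_of_continuousOn cG'.continuousOn
  have hSfin : volume S < ⊤ := lt_of_le_of_lt (measure_mono hSK) hK.measure_lt_top
  have key := hasDerivAt_integral_of_dominated_loc_of_deriv_le
    (μ := volume.restrict S) (F := fun τ x => G (τ, x))
    (F' := fun τ x => fderiv ℝ G (τ, x) (1, 0)) (x₀ := t)
    (bound := fun _ => |C| + 1) (s := Metric.ball t 1) (Metric.ball_mem_nhds t one_pos)
    (Filter.Eventually.of_forall fun τ =>
      ((hG.continuous.comp (continuous_const.prodMk continuous_id)).aestronglyMeasurable))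
    (((hG.continuous.comp (continuous_const.prodMk continuous_id)).continuousOn).integrableOn_compact hK |>.mono_set hSK)
    ((cG'.comp (continuous_const.prodMk continuous_id)).aestronglyMeasurable)
    ?_ (integrableOn_const hSfin.ne) ?_
  · exact key.2
  · refine (ae_restrict_mem hSm).mono fun x hx τ hτ => ?_
    have hmem : (τ, x) ∈ Icc (t - 1) (t + 1) ×ˢ K := by
      constructor
      · have : |τ - t| < 1 := by simpa [Real.dist_eq] using hτ
        constructor <;> [linarith [abs_lt.mp this |>.1]; linarith [abs_lt.mp this |>.2]]
      · exact hSK hx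
    have := hC _ hmem
    calc ‖fderiv ℝ G (τ, x) (1, 0)‖ ≤ C := this
      _ ≤ |C| + 1 := by cases abs_cases C <;> linarith
  · refine Filter.Eventually.of_forall fun x τ _ => ?_
    exact hasDerivAt_slice_left G (hGd (τ, x))

end diffint

section flux
open MeasureTheory Set

theorem continuous_fdapply {X : Type*} [NormedAddCommGroup X] [NormedSpace ℝ X]
    {f : X → ℝ} (hf : ContDiff ℝ (⊤ : ℕ∞) f) (w : X) :
    Continuous fun p => fderiv ℝ f p w :=
  (hf.continuous_fderiv (by norm_num)).clm_apply continuous_const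

theorem contDiff_fdapply {X : Type*} [NormedAddCommGroup X] [NormedSpace ℝ X]
    {f : X → ℝ} (hf : ContDiff ℝ (⊤ : ℕ∞) f) (w : X) :
    ContDiff ℝ (⊤ : ℕ∞) fun p => fderiv ℝ f p w :=
  ((contDiff_infty_iff_fderiv.mp hf).2).clm_apply contDiff_const

theorem continuous_pd2 {f : ℝ × ℝ → ℝ} (hf : ContDiff ℝ (⊤ : ℕ∞) f) (k : Fin 2) :
    Continuous (pd2 k f) := continuous_fdapply hf _

theorem contDiff_pd2 {f : ℝ × ℝ → ℝ} (hf : ContDiff ℝ (⊤ : ℕ∞) f) (k : Fin 2) :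
    ContDiff ℝ (⊤ : ℕ∞) (pd2 k f) := contDiff_fdapply hf _

theorem continuous_pd3 {f : (ℝ × ℝ) × ℝ → ℝ} (hf : ContDiff ℝ (⊤ : ℕ∞) f) (k : Fin 3) :
    Continuous (pd3 k f) := continuous_fdapply hf _

theorem contDiff_pd3 {f : (ℝ × ℝ) × ℝ → ℝ} (hf : ContDiff ℝ (⊤ : ℕ∞) f) (k : Fin 3) :
    ContDiff ℝ (⊤ : ℕ∞) (pd3 k f) := contDiff_fdapply hf _

variable {L₁ L₂ b : ℝ}

theorem integrableOn_B2 {f : ℝ × ℝ → ℝ} (hf : Continuous f) :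
    IntegrableOn f (Ioc 0 L₁ ×ˢ Ioc 0 L₂) :=
  (hf.continuousOn.integrableOn_compact (isCompact_Icc.prod isCompact_Icc)).mono_set
    (prod_mono Ioc_subset_Icc_self Ioc_subset_Icc_self)

theorem integrableOn_B3 {f : (ℝ × ℝ) × ℝ → ℝ} (hf : Continuous f) :
    IntegrableOn f ((Ioc 0 L₁ ×ˢ Ioc 0 L₂) ×ˢ Ioo (-b) 0) :=
  (hf.continuousOn.integrableOn_compact
      ((isCompact_Icc.prod isCompact_Icc).prod isCompact_Icc)).mono_set
    (prod_mono (prod_mono Ioc_subset_Icc_self Ioc_subset_Icc_self) Ioo_subset_Icc_self)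

theorem sflux0 (h1 : 0 ≤ L₁) {f : ℝ × ℝ → ℝ} (hf : ContDiff ℝ (⊤ : ℕ∞) f)
    (hper : ∀ x : ℝ × ℝ, f (x.1 + L₁, x.2) = f x) :
    ∫ x in Ioc 0 L₁ ×ˢ Ioc 0 L₂, pd2 0 f x = 0 := by
  have hd : Differentiable ℝ f := hf.differentiable (by norm_num)
  rw [setIntegral_prod_symm' _ (integrableOn_B2 (continuous_pd2 hf 0))]
  have inner : ∀ x2 : ℝ, ∫ x1 in Ioc 0 L₁, pd2 0 f (x1, x2) = 0 := by
    intro x2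
    have hda : ∀ x1 : ℝ, HasDerivAt (fun u => f (u, x2)) (pd2 0 f (x1, x2)) x1 := by
      intro x1
      have := hasDerivAt_slice_left f (hd (x1, x2))
      simpa [pd2] using this
    rw [integral_Ioc_hasDerivAt hda
      ((continuous_pd2 hf 0).comp (continuous_id.prodMk continuous_const)) h1]
    have := hper (0, x2)
    simp only [zero_add] at this
    rw [this, sub_self]
  simp [inner]

theorem sflux1 (h2 : 0 ≤ L₂) {f : ℝ × ℝ → ℝ} (hf : ContDiff ℝ (⊤ : ℕ∞) f)
    (hper : ∀ x : ℝ × ℝ, f (x.1, x.2 + L₂) = f x) :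
    ∫ x in Ioc 0 L₁ ×ˢ Ioc 0 L₂, pd2 1 f x = 0 := by
  have hd : Differentiable ℝ f := hf.differentiable (by norm_num)
  rw [setIntegral_prod' _ (integrableOn_B2 (continuous_pd2 hf 1))]
  have inner : ∀ x1 : ℝ, ∫ x2 in Ioc 0 L₂, pd2 1 f (x1, x2) = 0 := by
    intro x1
    have hda : ∀ x2 : ℝ, HasDerivAt (fun u => f (x1, u)) (pd2 1 f (x1, x2)) x2 := by
      intro x2
      have := hasDerivAt_slice_right f (hd (x1, x2))
      simpa [pd2] using this
    rw [integral_Ioc_hasDerivAt hda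
      ((continuous_pd2 hf 1).comp (continuous_const.prodMk continuous_id)) h2]
    have := hper (x1, 0)
    simp only [zero_add] at this
    rw [this, sub_self]
  simp [inner]

theorem pd3_slice {f : (ℝ × ℝ) × ℝ → ℝ} (hf : Differentiable ℝ f) (u : ℝ) (x : ℝ × ℝ)
    (k : Fin 2) :
    pd2 k (fun y => f (y, u)) x = pd3 (Fin.castSucc k) f (x, u) := by
  unfold pd2 pd3
  rw [fdapply_slice_left f (hf (x, u))]
  fin_cases k <;> simp

theorem vflux0 (h1 : 0 ≤ L₁) {f : (ℝ × ℝ) × ℝ → ℝ} (hf : ContDiff ℝ (⊤ : ℕ∞) f)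
    (hper : ∀ p : (ℝ × ℝ) × ℝ, f ((p.1.1 + L₁, p.1.2), p.2) = f p) :
    ∫ p in (Ioc 0 L₁ ×ˢ Ioc 0 L₂) ×ˢ Ioo (-b) 0, pd3 0 f p = 0 := by
  have hd : Differentiable ℝ f := hf.differentiable (by norm_num)
  rw [setIntegral_prod_symm' _ (integrableOn_B3 (continuous_pd3 hf 0))]
  have inner : ∀ u : ℝ, ∫ x in Ioc 0 L₁ ×ˢ Ioc 0 L₂, pd3 0 f (x, u) = 0 := by
    intro u
    have hg : ContDiff ℝ (⊤ : ℕ∞) fun y : ℝ × ℝ => f (y, u) :=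
      hf.comp (contDiff_id.prodMk contDiff_const)
    have hz := sflux0 (L₂ := L₂) h1 hg (fun x => hper ((x.1, x.2), u))
    have hcongr : (∫ x in Ioc 0 L₁ ×ˢ Ioc 0 L₂, pd3 0 f (x, u))
        = ∫ x in Ioc 0 L₁ ×ˢ Ioc 0 L₂, pd2 0 (fun y => f (y, u)) x :=
      setIntegral_congr_fun (measurableSet_Ioc.prod measurableSet_Ioc)
        (fun x _ => ((pd3_slice hd u x 0).trans (by rfl)).symm)
    rw [hcongr, hz]
  simp [inner]

theorem vflux1 (h2 : 0 ≤ L₂) {f : (ℝ × ℝ) × ℝ → ℝ} (hf : ContDiff ℝ (⊤ : ℕ∞) f)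
    (hper : ∀ p : (ℝ × ℝ) × ℝ, f ((p.1.1, p.1.2 + L₂), p.2) = f p) :
    ∫ p in (Ioc 0 L₁ ×ˢ Ioc 0 L₂) ×ˢ Ioo (-b) 0, pd3 1 f p = 0 := by
  have hd : Differentiable ℝ f := hf.differentiable (by norm_num)
  rw [setIntegral_prod_symm' _ (integrableOn_B3 (continuous_pd3 hf 1))]
  have inner : ∀ u : ℝ, ∫ x in Ioc 0 L₁ ×ˢ Ioc 0 L₂, pd3 1 f (x, u) = 0 := by
    intro u
    have hg : ContDiff ℝ (⊤ : ℕ∞) fun y : ℝ × ℝ => f (y, u) :=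
      hf.comp (contDiff_id.prodMk contDiff_const)
    have hz := sflux1 (L₁ := L₁) h2 hg (fun x => hper ((x.1, x.2), u))
    have hcongr : (∫ x in Ioc 0 L₁ ×ˢ Ioc 0 L₂, pd3 1 f (x, u))
        = ∫ x in Ioc 0 L₁ ×ˢ Ioc 0 L₂, pd2 1 (fun y => f (y, u)) x :=
      setIntegral_congr_fun (measurableSet_Ioc.prod measurableSet_Ioc)
        (fun x _ => ((pd3_slice hd u x 1).trans (by rfl)).symm)
    rw [hcongr, hz]
  simp [inner]

theorem vflux2 (hb : 0 ≤ b) {f : (ℝ × ℝ) × ℝ → ℝ} (hf : ContDiff ℝ (⊤ : ℕ∞) f) :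
    ∫ p in (Ioc 0 L₁ ×ˢ Ioc 0 L₂) ×ˢ Ioo (-b) 0, pd3 2 f p
      = ∫ x in Ioc 0 L₁ ×ˢ Ioc 0 L₂, (f (x, 0) - f (x, -b)) := by
  have hd : Differentiable ℝ f := hf.differentiable (by norm_num)
  rw [setIntegral_prod' _ (integrableOn_B3 (continuous_pd3 hf 2))]
  refine setIntegral_congr_fun (measurableSet_Ioc.prod measurableSet_Ioc) fun x _ => ?_
  have hda : ∀ u : ℝ, HasDerivAt (fun w => f (x, w)) (pd3 2 f (x, u)) u := by
    intro u
    have := hasDerivAt_slice_right f (hd (x, u))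
    simpa [pd3, ← Prod.mk_zero_zero] using this
  rw [← MeasureTheory.integral_Ioc_eq_integral_Ioo]
  exact integral_Ioc_hasDerivAt hda
    ((continuous_pd3 hf 2).comp (continuous_const.prodMk continuous_id)) (by linarith)

end flux

section pdhelp
theorem pd3_eq0 (f : (ℝ × ℝ) × ℝ → ℝ) (p) : pd3 0 f p = fderiv ℝ f p ((1,0),0) := rfl
theorem pd3_eq1 (f : (ℝ × ℝ) × ℝ → ℝ) (p) : pd3 1 f p = fderiv ℝ f p ((0,1),0) := rfl
theorem pd3_eq2 (f : (ℝ × ℝ) × ℝ → ℝ) (p) : pd3 2 f p = fderiv ℝ f p ((0,0),1) := rfl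
theorem pd2_eq0 (f : ℝ × ℝ → ℝ) (x) : pd2 0 f x = fderiv ℝ f x (1,0) := rfl
theorem pd2_eq1 (f : ℝ × ℝ → ℝ) (x) : pd2 1 f x = fderiv ℝ f x (0,1) := rfl
end pdhelp

/-- Energy–dissipation identity for the flattened linearized problem: if `(v,q,ζ)` solve
`∂ₜv + s∂₁v + s'v₃e₁ + div S(q,v) = Θ¹`, `div v = Θ²` in `Ω`,
`S(q,v)e₃ = (ζ − σΔζ)e₃ − γζe₁ + Θ³`, `∂ₜζ = v₃ − (γ/2)∂₁ζ + Θ⁴` on `Σ`, `v = 0` on `Σ_b`,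
then
`d/dt[∫_Ω ½|v|² + ∫_Σ ½|ζ|² + (σ/2)|∇ζ|²] + ∫_Ω ½|𝔻v|²
  = ∫_Ω γx₃v₃v₁ + ∫_Σ γζv₁ + ∫_Ω (v·Θ¹ + qΘ²) + ∫_Σ (−Θ³·v + (ζ − σΔζ)Θ⁴)`. -/
theorem flattened_energy_dissipation_identity
    (L₁ L₂ b σ γ : ℝ) (hL₁ : 0 < L₁) (hL₂ : 0 < L₂) (hb : 0 < b) (hσ : 0 ≤ σ) (hγ : 0 ≤ γ)
    (s : ℝ → ℝ) (hsdef : ∀ z, s z = γ / 2 * (b ^ 2 - z ^ 2))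
    (v : ℝ → (ℝ × ℝ) × ℝ → Fin 3 → ℝ) (q : ℝ → (ℝ × ℝ) × ℝ → ℝ)
    (ζ : ℝ → ℝ × ℝ → ℝ)
    (Θ1 : ℝ → (ℝ × ℝ) × ℝ → Fin 3 → ℝ) (Θ2 : ℝ → (ℝ × ℝ) × ℝ → ℝ)
    (Θ3 : ℝ → ℝ × ℝ → Fin 3 → ℝ) (Θ4 : ℝ → ℝ × ℝ → ℝ)
    -- smoothness in space-time
    (hv : ∀ i, ContDiff ℝ (⊤ : ℕ∞) fun tp : ℝ × ((ℝ × ℝ) × ℝ) => v tp.1 tp.2 i)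
    (hq : ContDiff ℝ (⊤ : ℕ∞) fun tp : ℝ × ((ℝ × ℝ) × ℝ) => q tp.1 tp.2)
    (hζ : ContDiff ℝ (⊤ : ℕ∞) fun tx : ℝ × (ℝ × ℝ) => ζ tx.1 tx.2)
    (hΘ1 : ∀ i, Continuous fun tp : ℝ × ((ℝ × ℝ) × ℝ) => Θ1 tp.1 tp.2 i)
    (hΘ2 : Continuous fun tp : ℝ × ((ℝ × ℝ) × ℝ) => Θ2 tp.1 tp.2)
    (hΘ3 : ∀ i, Continuous fun tx : ℝ × (ℝ × ℝ) => Θ3 tx.1 tx.2 i)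
    (hΘ4 : Continuous fun tx : ℝ × (ℝ × ℝ) => Θ4 tx.1 tx.2)
    -- horizontal periodicity
    (hperv : ∀ t (p : (ℝ × ℝ) × ℝ) i,
        v t ((p.1.1 + L₁, p.1.2), p.2) i = v t p i ∧
        v t ((p.1.1, p.1.2 + L₂), p.2) i = v t p i)
    (hperq : ∀ t (p : (ℝ × ℝ) × ℝ),
        q t ((p.1.1 + L₁, p.1.2), p.2) = q t p ∧ q t ((p.1.1, p.1.2 + L₂), p.2) = q t p)
    (hperζ : ∀ t (x : ℝ × ℝ),
        ζ t (x.1 + L₁, x.2) = ζ t x ∧ ζ t (x.1, x.2 + L₂) = ζ t x)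
    -- momentum equation in Ω
    (hmom : ∀ t, ∀ p ∈ (Set.Ioc 0 L₁ ×ˢ Set.Ioc 0 L₂) ×ˢ Set.Ioo (-b) 0, ∀ i : Fin 3,
        deriv (fun τ => v τ p i) t
          + s p.2 * pd3 0 (fun y => v t y i) p
          + deriv s p.2 * v t p 2 * (if i = 0 then 1 else 0)
          + (∑ j : Fin 3, pd3 j (fun y => stress (q t) (v t) j i y) p)
        = Θ1 t p i)
    -- divergence equation in Ω
    (hdiv : ∀ t, ∀ p ∈ (Set.Ioc 0 L₁ ×ˢ Set.Ioc 0 L₂) ×ˢ Set.Ioo (-b) 0,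
        ∑ j : Fin 3, pd3 j (fun y => v t y j) p = Θ2 t p)
    -- dynamic boundary condition on Σ = {x₃ = 0}
    (htop : ∀ t, ∀ x' ∈ Set.Ioc 0 L₁ ×ˢ Set.Ioc 0 L₂, ∀ i : Fin 3,
        stress (q t) (v t) i 2 (x', (0 : ℝ))
          = (if i = 2 then ζ t x' - σ * lap2 (ζ t) x' else 0)
            - γ * ζ t x' * (if i = 0 then 1 else 0) + Θ3 t x' i)
    -- kinematic boundary condition on Σ
    (hkin : ∀ t, ∀ x' ∈ Set.Ioc 0 L₁ ×ˢ Set.Ioc 0 L₂,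
        deriv (fun τ => ζ τ x') t
          = v t (x', (0 : ℝ)) 2 - γ / 2 * pd2 0 (ζ t) x' + Θ4 t x')
    -- no-slip on Σ_b = {x₃ = −b}
    (hbot : ∀ t (x' : ℝ × ℝ) (i : Fin 3), v t (x', -b) i = 0) :
    ∀ t : ℝ,
      HasDerivAt
        (fun τ =>
          (∫ p in (Set.Ioc 0 L₁ ×ˢ Set.Ioc 0 L₂) ×ˢ Set.Ioo (-b) 0,
              2⁻¹ * ∑ i : Fin 3, (v τ p i) ^ 2)
          + ∫ x' in Set.Ioc 0 L₁ ×ˢ Set.Ioc 0 L₂,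
              (2⁻¹ * (ζ τ x') ^ 2
                + σ / 2 * ((pd2 0 (ζ τ) x') ^ 2 + (pd2 1 (ζ τ) x') ^ 2)))
        (((∫ p in (Set.Ioc 0 L₁ ×ˢ Set.Ioc 0 L₂) ×ˢ Set.Ioo (-b) 0,
              γ * p.2 * v t p 2 * v t p 0)
          + (∫ x' in Set.Ioc 0 L₁ ×ˢ Set.Ioc 0 L₂, γ * ζ t x' * v t (x', (0 : ℝ)) 0)
          + (∫ p in (Set.Ioc 0 L₁ ×ˢ Set.Ioc 0 L₂) ×ˢ Set.Ioo (-b) 0,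
              (∑ i : Fin 3, v t p i * Θ1 t p i) + q t p * Θ2 t p)
          + ∫ x' in Set.Ioc 0 L₁ ×ˢ Set.Ioc 0 L₂,
              (-(∑ i : Fin 3, Θ3 t x' i * v t (x', (0 : ℝ)) i)
                + (ζ t x' - σ * lap2 (ζ t) x') * Θ4 t x'))
          - ∫ p in (Set.Ioc 0 L₁ ×ˢ Set.Ioc 0 L₂) ×ˢ Set.Ioo (-b) 0,
              2⁻¹ * ∑ i : Fin 3, ∑ j : Fin 3, (symGrad (v t) i j p) ^ 2)
        t := by
  intro t
  have h0L₁ : (0:ℝ) ≤ L₁ := hL₁.le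
  have h0L₂ : (0:ℝ) ≤ L₂ := hL₂.le
  have h0b : (0:ℝ) ≤ b := hb.le
  have hB2m : MeasurableSet (Set.Ioc (0:ℝ) L₁ ×ˢ Set.Ioc (0:ℝ) L₂) :=
    measurableSet_Ioc.prod measurableSet_Ioc
  have hB3m : MeasurableSet ((Set.Ioc (0:ℝ) L₁ ×ˢ Set.Ioc (0:ℝ) L₂) ×ˢ Set.Ioo (-b) (0:ℝ)) :=
    hB2m.prod measurableSet_Ioo
  have hK2 : IsCompact (Set.Icc (0:ℝ) L₁ ×ˢ Set.Icc (0:ℝ) L₂) :=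
    isCompact_Icc.prod isCompact_Icc
  have hK3 : IsCompact ((Set.Icc (0:ℝ) L₁ ×ˢ Set.Icc (0:ℝ) L₂) ×ˢ Set.Icc (-b) (0:ℝ)) :=
    hK2.prod isCompact_Icc
  have hB2K : Set.Ioc (0:ℝ) L₁ ×ˢ Set.Ioc (0:ℝ) L₂ ⊆ Set.Icc (0:ℝ) L₁ ×ˢ Set.Icc (0:ℝ) L₂ :=
    Set.prod_mono Set.Ioc_subset_Icc_self Set.Ioc_subset_Icc_self
  have hB3K : (Set.Ioc (0:ℝ) L₁ ×ˢ Set.Ioc (0:ℝ) L₂) ×ˢ Set.Ioo (-b) (0:ℝ)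
      ⊆ (Set.Icc (0:ℝ) L₁ ×ˢ Set.Icc (0:ℝ) L₂) ×ˢ Set.Icc (-b) (0:ℝ) :=
    Set.prod_mono hB2K Set.Ioo_subset_Icc_self
  -- smoothness
  have hv' : ∀ i, ContDiff ℝ (⊤:ℕ∞) fun tp : ℝ × ((ℝ × ℝ) × ℝ) => v tp.1 tp.2 i :=
    fun i => (hv i).of_le (by simp)
  have hq' : ContDiff ℝ (⊤:ℕ∞) fun tp : ℝ × ((ℝ × ℝ) × ℝ) => q tp.1 tp.2 := hq.of_le (by simp)
  have hζ' : ContDiff ℝ (⊤:ℕ∞) fun tx : ℝ × (ℝ × ℝ) => ζ tx.1 tx.2 := hζ.of_le (by simp)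
  have hvt : ∀ (τ:ℝ) (i : Fin 3), ContDiff ℝ (⊤:ℕ∞) fun p => v τ p i :=
    fun τ i => (hv' i).comp (contDiff_const.prodMk contDiff_id)
  have hqt : ∀ τ:ℝ, ContDiff ℝ (⊤:ℕ∞) (q τ) :=
    fun τ => hq'.comp (contDiff_const.prodMk contDiff_id)
  have hζt : ∀ τ:ℝ, ContDiff ℝ (⊤:ℕ∞) (ζ τ) :=
    fun τ => hζ'.comp (contDiff_const.prodMk contDiff_id)
  -- properties of s
  have hsda : ∀ z : ℝ, HasDerivAt s (-(γ * z)) z := by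
    intro z
    have h1 := (((hasDerivAt_const z (b^2)).sub (hasDerivAt_pow 2 z)).const_mul (γ/2))
    have h2 : HasDerivAt (fun u : ℝ => γ / 2 * (b ^ 2 - u ^ 2)) (-(γ*z)) z := by
      exact h1.congr_deriv (by push_cast; ring)
    have hse : s = fun u : ℝ => γ / 2 * (b ^ 2 - u ^ 2) := funext hsdef
    rw [hse]; exact h2
  have hs'z : ∀ z : ℝ, deriv s z = -(γ * z) := fun z => (hsda z).deriv
  have hscd : ContDiff ℝ (⊤:ℕ∞) fun p : (ℝ×ℝ)×ℝ => s p.2 := by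
    have hse : (fun p : (ℝ×ℝ)×ℝ => s p.2) = fun p : (ℝ×ℝ)×ℝ => γ/2*(b^2 - p.2^2) := by
      funext p; rw [hsdef]
    rw [hse]
    exact contDiff_const.mul (contDiff_const.sub (contDiff_snd.pow 2))
  -- time derivatives of v
  have hdiffv : ∀ (i : Fin 3) (z : ℝ × ((ℝ×ℝ)×ℝ)),
      DifferentiableAt ℝ (fun tp : ℝ × ((ℝ × ℝ) × ℝ) => v tp.1 tp.2 i) z :=
    fun i z => ((hv' i).differentiable (by norm_num)) z
  have hDvt : ∀ (i : Fin 3) (p : (ℝ×ℝ)×ℝ) (τ : ℝ), HasDerivAt (fun τ' => v τ' p i)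
      (fderiv ℝ (fun tp : ℝ × ((ℝ × ℝ) × ℝ) => v tp.1 tp.2 i) (τ, p) (1, 0)) τ :=
    fun i p τ => hasDerivAt_slice_left _ (hdiffv i (τ,p))
  -- VOLUME: differentiate under the integral
  have hGvcd : ContDiff ℝ (⊤:ℕ∞)
      fun tp : ℝ × ((ℝ × ℝ) × ℝ) => 2⁻¹ * ∑ i : Fin 3, (v tp.1 tp.2 i)^2 :=
    contDiff_const.mul (ContDiff.sum fun i _ => (hv' i).pow 2)
  have hVOL := hasDerivAt_setIntegral hK3 hB3K hB3m hGvcd t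
  have hGvapp : ∀ p : (ℝ×ℝ)×ℝ,
      fderiv ℝ (fun tp : ℝ × ((ℝ × ℝ) × ℝ) => 2⁻¹ * ∑ i : Fin 3, (v tp.1 tp.2 i)^2) (t,p) (1,0)
      = ∑ i : Fin 3, v t p i *
          fderiv ℝ (fun tp : ℝ × ((ℝ × ℝ) × ℝ) => v tp.1 tp.2 i) (t,p) (1,0) := by
    intro p
    rw [fdapply_const_mul (DifferentiableAt.fun_sum (fun i _ => (hdiffv i (t,p)).fun_pow 2)) _ _]
    rw [fdapply_sum (fun i _ => (hdiffv i (t,p)).fun_pow 2) _]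
    rw [Finset.mul_sum]
    exact Finset.sum_congr rfl fun i _ => by rw [fdapply_sq (hdiffv i (t,p))]; ring
  have hVOL2 : HasDerivAt (fun τ => ∫ p in (Set.Ioc 0 L₁ ×ˢ Set.Ioc 0 L₂) ×ˢ Set.Ioo (-b) 0,
        2⁻¹ * ∑ i : Fin 3, (v τ p i)^2)
      (∫ p in (Set.Ioc 0 L₁ ×ˢ Set.Ioc 0 L₂) ×ˢ Set.Ioo (-b) 0,
        ∑ i : Fin 3, v t p i *
          fderiv ℝ (fun tp : ℝ × ((ℝ × ℝ) × ℝ) => v tp.1 tp.2 i) (t,p) (1,0)) t := by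
    have heq := setIntegral_congr_fun (μ := volume) hB3m
      (f := fun p => fderiv ℝ
        (fun tp : ℝ × ((ℝ × ℝ) × ℝ) => 2⁻¹ * ∑ i : Fin 3, (v tp.1 tp.2 i)^2) (t,p) (1,0))
      (g := fun p => ∑ i : Fin 3, v t p i *
          fderiv ℝ (fun tp : ℝ × ((ℝ × ℝ) × ℝ) => v tp.1 tp.2 i) (t,p) (1,0))
      (fun p _ => hGvapp p)
    exact heq ▸ hVOL
  -- stress and W functions
  have hstressCD : ∀ (j i : Fin 3), ContDiff ℝ (⊤:ℕ∞) fun y => stress (q t) (v t) j i y := by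
    intro j i
    simp only [stress, symGrad]
    apply ContDiff.sub
    · by_cases h : j = i
      · simpa [h] using hqt t
      · simpa [h] using contDiff_const (c := (0:ℝ))
    · exact (contDiff_pd3 (hvt t i) j).add (contDiff_pd3 (hvt t j) i)
  set W0 : (ℝ×ℝ)×ℝ → ℝ := fun y => s y.2 * (2⁻¹ * ∑ i : Fin 3, (v t y i)^2)
      + ∑ i : Fin 3, stress (q t) (v t) 0 i y * v t y i with hW0def
  set W1 : (ℝ×ℝ)×ℝ → ℝ := fun y => ∑ i : Fin 3, stress (q t) (v t) 1 i y * v t y i with hW1def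
  set W2 : (ℝ×ℝ)×ℝ → ℝ := fun y => ∑ i : Fin 3, stress (q t) (v t) 2 i y * v t y i with hW2def
  have hW0cd : ContDiff ℝ (⊤:ℕ∞) W0 := by
    rw [hW0def]
    exact (hscd.mul (contDiff_const.mul (ContDiff.sum fun i _ => (hvt t i).pow 2))).add
      (ContDiff.sum fun i _ => (hstressCD 0 i).mul (hvt t i))
  have hW1cd : ContDiff ℝ (⊤:ℕ∞) W1 := by
    rw [hW1def]; exact ContDiff.sum fun i _ => (hstressCD 1 i).mul (hvt t i)
  have hW2cd : ContDiff ℝ (⊤:ℕ∞) W2 := by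
    rw [hW2def]; exact ContDiff.sum fun i _ => (hstressCD 2 i).mul (hvt t i)
  -- periodicity adapters
  have hT1 : ∀ p : (ℝ × ℝ) × ℝ, ((p.1.1 + L₁, p.1.2), p.2) = p + ((L₁, 0), (0:ℝ)) := by
    intro p; simp [Prod.ext_iff]
  have hT2 : ∀ p : (ℝ × ℝ) × ℝ, ((p.1.1, p.1.2 + L₂), p.2) = p + ((0, L₂), (0:ℝ)) := by
    intro p; simp [Prod.ext_iff]
  have pd3per1 : ∀ (f : (ℝ × ℝ) × ℝ → ℝ), Differentiable ℝ f →
      (∀ p, f ((p.1.1 + L₁, p.1.2), p.2) = f p) →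
      ∀ (k : Fin 3) (p : (ℝ×ℝ)×ℝ), pd3 k f ((p.1.1 + L₁, p.1.2), p.2) = pd3 k f p := by
    intro f hf hper k p
    unfold pd3
    rw [hT1 p]
    exact fdapply_periodic hf _ (fun x => by rw [← hT1 x]; exact hper x) p _
  have pd3per2 : ∀ (f : (ℝ × ℝ) × ℝ → ℝ), Differentiable ℝ f →
      (∀ p, f ((p.1.1, p.1.2 + L₂), p.2) = f p) →
      ∀ (k : Fin 3) (p : (ℝ×ℝ)×ℝ), pd3 k f ((p.1.1, p.1.2 + L₂), p.2) = pd3 k f p := by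
    intro f hf hper k p
    unfold pd3
    rw [hT2 p]
    exact fdapply_periodic hf _ (fun x => by rw [← hT2 x]; exact hper x) p _
  have hvper1 : ∀ (p : (ℝ×ℝ)×ℝ) (i : Fin 3), v t ((p.1.1 + L₁, p.1.2), p.2) i = v t p i :=
    fun p i => (hperv t p i).1
  have hvper2 : ∀ (p : (ℝ×ℝ)×ℝ) (i : Fin 3), v t ((p.1.1, p.1.2 + L₂), p.2) i = v t p i :=
    fun p i => (hperv t p i).2
  have hdvt : ∀ i : Fin 3, Differentiable ℝ (fun y => v t y i) :=
    fun i => (hvt t i).differentiable (by norm_num)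
  have hSper1 : ∀ (j i : Fin 3) (p : (ℝ×ℝ)×ℝ),
      stress (q t) (v t) j i ((p.1.1 + L₁, p.1.2), p.2) = stress (q t) (v t) j i p := by
    intro j i p
    simp only [stress, symGrad]
    rw [pd3per1 _ (hdvt i) (fun p => hvper1 p i) j p,
        pd3per1 _ (hdvt j) (fun p => hvper1 p j) i p, (hperq t p).1]
  have hSper2 : ∀ (j i : Fin 3) (p : (ℝ×ℝ)×ℝ),
      stress (q t) (v t) j i ((p.1.1, p.1.2 + L₂), p.2) = stress (q t) (v t) j i p := by
    intro j i p
    simp only [stress, symGrad]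
    rw [pd3per2 _ (hdvt i) (fun p => hvper2 p i) j p,
        pd3per2 _ (hdvt j) (fun p => hvper2 p j) i p, (hperq t p).2]
  have hW0per1 : ∀ p : (ℝ×ℝ)×ℝ, W0 ((p.1.1 + L₁, p.1.2), p.2) = W0 p := by
    intro p; simp only [hW0def]; simp [hvper1 p, hSper1]
  have hW1per2 : ∀ p : (ℝ×ℝ)×ℝ, W1 ((p.1.1, p.1.2 + L₂), p.2) = W1 p := by
    intro p; simp only [hW1def]; simp [hvper2 p, hSper2]
  -- flux identities
  have hfW0 : ∫ p in (Set.Ioc 0 L₁ ×ˢ Set.Ioc 0 L₂) ×ˢ Set.Ioo (-b) 0, pd3 0 W0 p = 0 :=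
    vflux0 h0L₁ hW0cd hW0per1
  have hfW1 : ∫ p in (Set.Ioc 0 L₁ ×ˢ Set.Ioc 0 L₂) ×ˢ Set.Ioo (-b) 0, pd3 1 W1 p = 0 :=
    vflux1 h0L₂ hW1cd hW1per2
  have hW2bot : ∀ x : ℝ × ℝ, W2 (x, -b) = 0 := by
    intro x
    simp only [hW2def]
    have hb0 : ∀ i : Fin 3, v t (x, -b) i = 0 := hbot t x
    simp [hb0]
  have hfW2 : ∫ p in (Set.Ioc 0 L₁ ×ˢ Set.Ioc 0 L₂) ×ˢ Set.Ioo (-b) 0, pd3 2 W2 p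
      = ∫ x in Set.Ioc 0 L₁ ×ˢ Set.Ioc 0 L₂, W2 (x, (0:ℝ)) := by
    rw [vflux2 h0b hW2cd]
    simp only [hW2bot, sub_zero]
  -- pointwise energy identity in the bulk
  have key : ∀ p ∈ (Set.Ioc 0 L₁ ×ˢ Set.Ioc 0 L₂) ×ˢ Set.Ioo (-b) (0:ℝ),
      (∑ i : Fin 3, v t p i *
          fderiv ℝ (fun tp : ℝ × ((ℝ × ℝ) × ℝ) => v tp.1 tp.2 i) (t,p) (1,0))
      = (γ * p.2 * v t p 2 * v t p 0
          + ((∑ i : Fin 3, v t p i * Θ1 t p i) + q t p * Θ2 t p)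
          - 2⁻¹ * ∑ i : Fin 3, ∑ j : Fin 3, (symGrad (v t) i j p) ^ 2)
        - (pd3 0 W0 p + pd3 1 W1 p + pd3 2 W2 p) := by
    intro p hp
    have hmom' : ∀ i : Fin 3,
        fderiv ℝ (fun tp : ℝ × ((ℝ × ℝ) × ℝ) => v tp.1 tp.2 i) (t,p) (1,0)
        = Θ1 t p i - s p.2 * pd3 0 (fun y => v t y i) p
          - deriv s p.2 * v t p 2 * (if i = 0 then 1 else 0)
          - ∑ j : Fin 3, pd3 j (fun y => stress (q t) (v t) j i y) p := by
      intro i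
      have h := hmom t p hp i
      rw [(hDvt i p t).deriv] at h
      linarith [h]
    have hdiv' := hdiv t p hp
    have dvt : ∀ i : Fin 3, DifferentiableAt ℝ (fun y => v t y i) p := fun i => hdvt i p
    have dstress : ∀ j i : Fin 3, DifferentiableAt ℝ (fun y => stress (q t) (v t) j i y) p :=
      fun j i => (hstressCD j i).differentiable (by norm_num) p
    have dE : DifferentiableAt ℝ (fun y => 2⁻¹ * ∑ i : Fin 3, (v t y i)^2) p :=
      (contDiff_const.mul (ContDiff.sum fun i _ => (hvt t i).pow 2)).differentiable
        (by norm_num) p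
    have dssnd : DifferentiableAt ℝ (fun y : (ℝ×ℝ)×ℝ => s y.2) p :=
      hscd.differentiable (by norm_num) p
    have hsval : ∀ w : ((ℝ×ℝ)×ℝ), fderiv ℝ (fun y : (ℝ×ℝ)×ℝ => s y.2) p w
        = -(γ * p.2) * w.2 := by
      intro w
      have h : HasFDerivAt (fun y : (ℝ×ℝ)×ℝ => s y.2)
          ((-(γ * p.2)) • ContinuousLinearMap.snd ℝ (ℝ×ℝ) ℝ) p :=
        (hsda p.2).comp_hasFDerivAt p hasFDerivAt_snd
      rw [h.fderiv]; rfl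
    have hE : ∀ w : ((ℝ×ℝ)×ℝ), fderiv ℝ (fun y => 2⁻¹ * ∑ i : Fin 3, (v t y i)^2) p w
        = ∑ i : Fin 3, v t p i * fderiv ℝ (fun y => v t y i) p w := by
      intro w
      rw [fdapply_const_mul (DifferentiableAt.fun_sum (fun i _ => (dvt i).fun_pow 2)) _ _]
      rw [fdapply_sum (fun i _ => (dvt i).fun_pow 2) _]
      rw [Finset.mul_sum]
      exact Finset.sum_congr rfl fun i _ => by rw [fdapply_sq (dvt i)]; ring
    have hmulS : ∀ (j i : Fin 3) (w : ((ℝ×ℝ)×ℝ)),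
        fderiv ℝ (fun y => stress (q t) (v t) j i y * v t y i) p w
        = fderiv ℝ (fun y => stress (q t) (v t) j i y) p w * v t p i
          + stress (q t) (v t) j i p * fderiv ℝ (fun y => v t y i) p w :=
      fun j i w => fdapply_mul (dstress j i) (dvt i) w
    have hsE : ∀ w : ((ℝ×ℝ)×ℝ),
        fderiv ℝ (fun y => s y.2 * (2⁻¹ * ∑ i : Fin 3, (v t y i)^2)) p w
        = fderiv ℝ (fun y : (ℝ×ℝ)×ℝ => s y.2) p w * (2⁻¹ * ∑ i : Fin 3, (v t p i)^2)
          + s p.2 * fderiv ℝ (fun y => 2⁻¹ * ∑ i : Fin 3, (v t y i)^2) p w :=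
      fun w => fdapply_mul dssnd dE w
    rw [hW0def, hW1def, hW2def]
    simp only [pd3_eq0, pd3_eq1, pd3_eq2]
    rw [fdapply_add (dssnd.fun_mul dE) (DifferentiableAt.fun_sum fun i _ => (dstress 0 i).fun_mul (dvt i)) _]
    simp only [hsE, hsval, hE]
    rw [fdapply_sum (fun i _ => (dstress 0 i).fun_mul (dvt i)) _,
        fdapply_sum (fun i _ => (dstress 1 i).fun_mul (dvt i)) _,
        fdapply_sum (fun i _ => (dstress 2 i).fun_mul (dvt i)) _]
    simp only [hmulS]
    simp only [hmom', hs'z]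
    simp only [Fin.sum_univ_three, stress, symGrad, pd3_eq0, pd3_eq1, pd3_eq2]
    simp only [Fin.sum_univ_three] at hdiv'
    simp only [pd3_eq0, pd3_eq1, pd3_eq2] at hdiv'
    simp only [Fin.isValue, one_ne_zero, Fin.reduceEq, if_true, if_false, ite_true, ite_false,
      reduceIte, mul_one, mul_zero, add_zero, zero_add, sub_zero]
    linear_combination (q t p) * hdiv'
  have hVOL3 : HasDerivAt (fun τ => ∫ p in (Set.Ioc 0 L₁ ×ˢ Set.Ioc 0 L₂) ×ˢ Set.Ioo (-b) 0,
        2⁻¹ * ∑ i : Fin 3, (v τ p i)^2)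
      (∫ p in (Set.Ioc 0 L₁ ×ˢ Set.Ioc 0 L₂) ×ˢ Set.Ioo (-b) 0,
        ((γ * p.2 * v t p 2 * v t p 0
          + ((∑ i : Fin 3, v t p i * Θ1 t p i) + q t p * Θ2 t p)
          - 2⁻¹ * ∑ i : Fin 3, ∑ j : Fin 3, (symGrad (v t) i j p) ^ 2)
        - (pd3 0 W0 p + pd3 1 W1 p + pd3 2 W2 p))) t := by
    rwa [setIntegral_congr_fun hB3m (fun p hp => key p hp)] at hVOL2
  -- continuity stock
  have cvt : ∀ i : Fin 3, Continuous fun p : (ℝ×ℝ)×ℝ => v t p i := fun i => (hvt t i).continuous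
  have cΘ1 : ∀ i : Fin 3, Continuous fun p : (ℝ×ℝ)×ℝ => Θ1 t p i :=
    fun i => (hΘ1 i).comp (continuous_const.prodMk continuous_id)
  have cΘ2 : Continuous fun p : (ℝ×ℝ)×ℝ => Θ2 t p :=
    hΘ2.comp (continuous_const.prodMk continuous_id)
  have cq : Continuous (q t) := (hqt t).continuous
  have csym : ∀ i j : Fin 3, Continuous fun p => symGrad (v t) i j p := by
    intro i j
    simp only [symGrad]
    exact (continuous_pd3 (hvt t j) i).add (continuous_pd3 (hvt t i) j)
  have intA : IntegrableOn (fun p : (ℝ×ℝ)×ℝ => γ * p.2 * v t p 2 * v t p 0)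
      ((Set.Ioc 0 L₁ ×ˢ Set.Ioc 0 L₂) ×ˢ Set.Ioo (-b) 0) :=
    integrableOn_B3 (((continuous_const.mul continuous_snd).mul (cvt 2)).mul (cvt 0))
  have intB : IntegrableOn
      (fun p : (ℝ×ℝ)×ℝ => (∑ i : Fin 3, v t p i * Θ1 t p i) + q t p * Θ2 t p)
      ((Set.Ioc 0 L₁ ×ˢ Set.Ioc 0 L₂) ×ˢ Set.Ioo (-b) 0) :=
    integrableOn_B3 ((continuous_finset_sum _ fun i _ => (cvt i).mul (cΘ1 i)).add (cq.mul cΘ2))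
  have intC : IntegrableOn
      (fun p : (ℝ×ℝ)×ℝ => 2⁻¹ * ∑ i : Fin 3, ∑ j : Fin 3, (symGrad (v t) i j p) ^ 2)
      ((Set.Ioc 0 L₁ ×ˢ Set.Ioc 0 L₂) ×ˢ Set.Ioo (-b) 0) :=
    integrableOn_B3 (continuous_const.mul (continuous_finset_sum _ fun i _ =>
      continuous_finset_sum _ fun j _ => (csym i j).pow 2))
  have intW0 : IntegrableOn (fun p => pd3 0 W0 p)
      ((Set.Ioc 0 L₁ ×ˢ Set.Ioc 0 L₂) ×ˢ Set.Ioo (-b) 0) := integrableOn_B3 (continuous_pd3 hW0cd 0)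
  have intW1 : IntegrableOn (fun p => pd3 1 W1 p)
      ((Set.Ioc 0 L₁ ×ˢ Set.Ioc 0 L₂) ×ˢ Set.Ioo (-b) 0) := integrableOn_B3 (continuous_pd3 hW1cd 1)
  have intW2 : IntegrableOn (fun p => pd3 2 W2 p)
      ((Set.Ioc 0 L₁ ×ˢ Set.Ioc 0 L₂) ×ˢ Set.Ioo (-b) 0) := integrableOn_B3 (continuous_pd3 hW2cd 2)
  have hWint : ∫ p in (Set.Ioc 0 L₁ ×ˢ Set.Ioc 0 L₂) ×ˢ Set.Ioo (-b) 0,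
      (pd3 0 W0 p + pd3 1 W1 p + pd3 2 W2 p)
      = ∫ x in Set.Ioc 0 L₁ ×ˢ Set.Ioc 0 L₂, W2 (x, (0:ℝ)) := by
    have h1 := MeasureTheory.integral_add (μ := volume.restrict
      ((Set.Ioc 0 L₁ ×ˢ Set.Ioc 0 L₂) ×ˢ Set.Ioo (-b) 0)) (intW0.add intW1) intW2
    have h2 := MeasureTheory.integral_add (μ := volume.restrict
      ((Set.Ioc 0 L₁ ×ˢ Set.Ioc 0 L₂) ×ˢ Set.Ioo (-b) 0)) intW0 intW1
    simp only [Pi.add_apply] at h1 h2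
    rw [h1, h2, hfW0, hfW1, hfW2]
    ring
  have hsplitV : ∫ p in (Set.Ioc 0 L₁ ×ˢ Set.Ioc 0 L₂) ×ˢ Set.Ioo (-b) 0,
      ((γ * p.2 * v t p 2 * v t p 0
          + ((∑ i : Fin 3, v t p i * Θ1 t p i) + q t p * Θ2 t p)
          - 2⁻¹ * ∑ i : Fin 3, ∑ j : Fin 3, (symGrad (v t) i j p) ^ 2)
        - (pd3 0 W0 p + pd3 1 W1 p + pd3 2 W2 p))
      = (∫ p in (Set.Ioc 0 L₁ ×ˢ Set.Ioc 0 L₂) ×ˢ Set.Ioo (-b) 0, γ * p.2 * v t p 2 * v t p 0)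
        + (∫ p in (Set.Ioc 0 L₁ ×ˢ Set.Ioc 0 L₂) ×ˢ Set.Ioo (-b) 0,
            (∑ i : Fin 3, v t p i * Θ1 t p i) + q t p * Θ2 t p)
        - (∫ p in (Set.Ioc 0 L₁ ×ˢ Set.Ioc 0 L₂) ×ˢ Set.Ioo (-b) 0,
            2⁻¹ * ∑ i : Fin 3, ∑ j : Fin 3, (symGrad (v t) i j p) ^ 2)
        - ∫ x in Set.Ioc 0 L₁ ×ˢ Set.Ioc 0 L₂, W2 (x, (0:ℝ)) := by
    have h3 := MeasureTheory.integral_sub (μ := volume.restrict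
      ((Set.Ioc 0 L₁ ×ˢ Set.Ioc 0 L₂) ×ˢ Set.Ioo (-b) 0))
      ((intA.add intB).sub intC) ((intW0.add intW1).add intW2)
    have h4 := MeasureTheory.integral_sub (μ := volume.restrict
      ((Set.Ioc 0 L₁ ×ˢ Set.Ioc 0 L₂) ×ˢ Set.Ioo (-b) 0)) (intA.add intB) intC
    have h5 := MeasureTheory.integral_add (μ := volume.restrict
      ((Set.Ioc 0 L₁ ×ˢ Set.Ioc 0 L₂) ×ˢ Set.Ioo (-b) 0)) intA intB
    simp only [Pi.add_apply, Pi.sub_apply] at h3 h4 h5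
    rw [h3, h4, h5, hWint]
  have hVOL4 := hsplitV ▸ hVOL3
  -- top boundary value of W2
  have hW2top : ∀ x' ∈ Set.Ioc (0:ℝ) L₁ ×ˢ Set.Ioc (0:ℝ) L₂, W2 (x', (0:ℝ))
      = (ζ t x' - σ * lap2 (ζ t) x') * v t (x',(0:ℝ)) 2 - γ * ζ t x' * v t (x',(0:ℝ)) 0
        + ∑ i : Fin 3, Θ3 t x' i * v t (x',(0:ℝ)) i := by
    intro x' hx'
    simp only [hW2def]
    have hsymm : ∀ i : Fin 3,
        stress (q t) (v t) 2 i (x',(0:ℝ)) = stress (q t) (v t) i 2 (x',(0:ℝ)) := by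
      intro i
      simp only [stress, symGrad]
      rw [add_comm (pd3 2 (fun y => v t y i) (x', 0)) (pd3 i (fun y => v t y 2) (x', 0))]
      congr 1
      by_cases h : i = 2
      · simp [h]
      · rw [if_neg (fun hh => h hh.symm), if_neg h]
    calc (∑ i : Fin 3, stress (q t) (v t) 2 i (x', (0:ℝ)) * v t (x',(0:ℝ)) i)
        = ∑ i : Fin 3, (((if i = 2 then ζ t x' - σ * lap2 (ζ t) x' else 0)
            - γ * ζ t x' * (if i = 0 then 1 else 0)) + Θ3 t x' i) * v t (x',(0:ℝ)) i :=
          Finset.sum_congr rfl fun i _ => by rw [hsymm i, htop t x' hx' i]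
      _ = _ := by
          simp only [Fin.sum_univ_three, Fin.isValue, Fin.reduceEq, if_true, if_false,
            ite_true, ite_false, reduceIte, mul_one, mul_zero, add_zero, zero_add, sub_zero]
          ring
  have hTW : ∫ x in Set.Ioc 0 L₁ ×ˢ Set.Ioc 0 L₂, W2 (x, (0:ℝ))
      = ∫ x' in Set.Ioc 0 L₁ ×ˢ Set.Ioc 0 L₂,
          ((ζ t x' - σ * lap2 (ζ t) x') * v t (x',(0:ℝ)) 2 - γ * ζ t x' * v t (x',(0:ℝ)) 0
            + ∑ i : Fin 3, Θ3 t x' i * v t (x',(0:ℝ)) i) :=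
    setIntegral_congr_fun hB2m (fun x' hx' => hW2top x' hx')
  -- SURFACE part
  have hζd : Differentiable ℝ (fun tx : ℝ × (ℝ × ℝ) => ζ tx.1 tx.2) :=
    hζ'.differentiable (by norm_num)
  have dζt : Differentiable ℝ (ζ t) := (hζt t).differentiable (by norm_num)
  have hZeq0 : ∀ (τ : ℝ) (x : ℝ×ℝ), pd2 0 (ζ τ) x
      = fderiv ℝ (fun tx : ℝ × (ℝ × ℝ) => ζ tx.1 tx.2) (τ, x) (0, (1, 0)) := by
    intro τ x
    rw [pd2_eq0]
    exact fdapply_slice_right (fun tx : ℝ × (ℝ × ℝ) => ζ tx.1 tx.2) (hζd (τ,x)) (1,0)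
  have hZeq1 : ∀ (τ : ℝ) (x : ℝ×ℝ), pd2 1 (ζ τ) x
      = fderiv ℝ (fun tx : ℝ × (ℝ × ℝ) => ζ tx.1 tx.2) (τ, x) (0, (0, 1)) := by
    intro τ x
    rw [pd2_eq1]
    exact fdapply_slice_right (fun tx : ℝ × (ℝ × ℝ) => ζ tx.1 tx.2) (hζd (τ,x)) (0,1)
  have hGscd : ContDiff ℝ (⊤:ℕ∞) fun z : ℝ × (ℝ×ℝ) => 2⁻¹ * (ζ z.1 z.2)^2
      + σ/2 * ((fderiv ℝ (fun tx : ℝ × (ℝ × ℝ) => ζ tx.1 tx.2) z (0,(1,0)))^2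
        + (fderiv ℝ (fun tx : ℝ × (ℝ × ℝ) => ζ tx.1 tx.2) z (0,(0,1)))^2) :=
    (contDiff_const.mul (hζ'.pow 2)).add (contDiff_const.mul
      (((contDiff_fdapply hζ' (0,(1,0))).pow 2).add ((contDiff_fdapply hζ' (0,(0,1))).pow 2)))
  have hSURF := hasDerivAt_setIntegral hK2 hB2K hB2m hGscd t
  have hSURF2 : HasDerivAt (fun τ => ∫ x' in Set.Ioc 0 L₁ ×ˢ Set.Ioc 0 L₂,
        (2⁻¹ * ζ τ x' ^ 2 + σ / 2 * (pd2 0 (ζ τ) x' ^ 2 + pd2 1 (ζ τ) x' ^ 2)))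
      (∫ x in Set.Ioc 0 L₁ ×ˢ Set.Ioc 0 L₂,
        fderiv ℝ (fun z : ℝ × (ℝ×ℝ) => 2⁻¹ * (ζ z.1 z.2)^2
          + σ/2 * ((fderiv ℝ (fun tx : ℝ × (ℝ × ℝ) => ζ tx.1 tx.2) z (0,(1,0)))^2
            + (fderiv ℝ (fun tx : ℝ × (ℝ × ℝ) => ζ tx.1 tx.2) z (0,(0,1)))^2)) (t, x) (1,0)) t := by
    have hfun : (fun τ => ∫ x' in Set.Ioc 0 L₁ ×ˢ Set.Ioc 0 L₂,
        (2⁻¹ * ζ τ x' ^ 2 + σ / 2 * (pd2 0 (ζ τ) x' ^ 2 + pd2 1 (ζ τ) x' ^ 2)))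
        = (fun τ => ∫ x' in Set.Ioc 0 L₁ ×ˢ Set.Ioc 0 L₂,
          (2⁻¹ * ζ τ x' ^ 2
            + σ/2 * ((fderiv ℝ (fun tx : ℝ × (ℝ × ℝ) => ζ tx.1 tx.2) (τ, x') (0,(1,0)))^2
              + (fderiv ℝ (fun tx : ℝ × (ℝ × ℝ) => ζ tx.1 tx.2) (τ, x') (0,(0,1)))^2))) := by
      funext τ
      simp only [hZeq0, hZeq1]
    rw [hfun]
    exact hSURF
  -- pointwise time derivative on the surface
  have dA10 : Differentiable ℝ (fun z : ℝ × (ℝ×ℝ) =>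
      fderiv ℝ (fun tx : ℝ × (ℝ × ℝ) => ζ tx.1 tx.2) z (1,0)) :=
    (contDiff_fdapply hζ' (1,0)).differentiable (by norm_num)
  have hG1cd : ContDiff ℝ (⊤:ℕ∞) fun x' : ℝ×ℝ =>
      fderiv ℝ (fun tx : ℝ × (ℝ × ℝ) => ζ tx.1 tx.2) (t, x') (1, 0) :=
    (contDiff_fdapply hζ' (1,0)).comp (contDiff_const.prodMk contDiff_id)
  have hDZ0 : ∀ x : ℝ×ℝ, fderiv ℝ (fun z : ℝ × (ℝ×ℝ) =>
        fderiv ℝ (fun tx : ℝ × (ℝ × ℝ) => ζ tx.1 tx.2) z (0,(1,0))) (t,x) (1,0)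
      = pd2 0 (fun x' : ℝ×ℝ =>
          fderiv ℝ (fun tx : ℝ × (ℝ × ℝ) => ζ tx.1 tx.2) (t, x') (1, 0)) x := by
    intro x
    rw [fdapply_symm hζ' (t,x) (0,(1,0)) (1,0), pd2_eq0]
    exact (fdapply_slice_right (fun z : ℝ × (ℝ×ℝ) =>
      fderiv ℝ (fun tx : ℝ × (ℝ × ℝ) => ζ tx.1 tx.2) z (1,0)) (dA10 (t,x)) (1,0)).symm
  have hDZ1 : ∀ x : ℝ×ℝ, fderiv ℝ (fun z : ℝ × (ℝ×ℝ) =>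
        fderiv ℝ (fun tx : ℝ × (ℝ × ℝ) => ζ tx.1 tx.2) z (0,(0,1))) (t,x) (1,0)
      = pd2 1 (fun x' : ℝ×ℝ =>
          fderiv ℝ (fun tx : ℝ × (ℝ × ℝ) => ζ tx.1 tx.2) (t, x') (1, 0)) x := by
    intro x
    rw [fdapply_symm hζ' (t,x) (0,(0,1)) (1,0), pd2_eq1]
    exact (fdapply_slice_right (fun z : ℝ × (ℝ×ℝ) =>
      fderiv ℝ (fun tx : ℝ × (ℝ × ℝ) => ζ tx.1 tx.2) z (1,0)) (dA10 (t,x)) (0,1)).symm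
  have hGsapp : ∀ x : ℝ×ℝ,
      fderiv ℝ (fun z : ℝ × (ℝ×ℝ) => 2⁻¹ * (ζ z.1 z.2)^2
          + σ/2 * ((fderiv ℝ (fun tx : ℝ × (ℝ × ℝ) => ζ tx.1 tx.2) z (0,(1,0)))^2
            + (fderiv ℝ (fun tx : ℝ × (ℝ × ℝ) => ζ tx.1 tx.2) z (0,(0,1)))^2)) (t, x) (1,0)
      = ζ t x * (fderiv ℝ (fun tx : ℝ × (ℝ × ℝ) => ζ tx.1 tx.2) (t, x) (1, 0))
        + σ * (pd2 0 (ζ t) x * pd2 0 (fun x' : ℝ×ℝ =>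
              fderiv ℝ (fun tx : ℝ × (ℝ × ℝ) => ζ tx.1 tx.2) (t, x') (1, 0)) x
          + pd2 1 (ζ t) x * pd2 1 (fun x' : ℝ×ℝ =>
              fderiv ℝ (fun tx : ℝ × (ℝ × ℝ) => ζ tx.1 tx.2) (t, x') (1, 0)) x) := by
    intro x
    have dZ0 : DifferentiableAt ℝ (fun z : ℝ × (ℝ×ℝ) =>
        fderiv ℝ (fun tx : ℝ × (ℝ × ℝ) => ζ tx.1 tx.2) z (0,(1,0))) (t,x) :=
      (contDiff_fdapply hζ' (0,(1,0))).differentiable (by norm_num) (t,x)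
    have dZ1 : DifferentiableAt ℝ (fun z : ℝ × (ℝ×ℝ) =>
        fderiv ℝ (fun tx : ℝ × (ℝ × ℝ) => ζ tx.1 tx.2) z (0,(0,1))) (t,x) :=
      (contDiff_fdapply hζ' (0,(0,1))).differentiable (by norm_num) (t,x)
    have dζz : DifferentiableAt ℝ (fun z : ℝ × (ℝ×ℝ) => ζ z.1 z.2) (t,x) := hζd (t,x)
    rw [fdapply_add ((differentiableAt_const _).fun_mul (dζz.fun_pow 2))
      ((differentiableAt_const _).fun_mul ((dZ0.fun_pow 2).fun_add (dZ1.fun_pow 2))) _]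
    rw [fdapply_const_mul (dζz.fun_pow 2) _ _, fdapply_sq dζz _]
    rw [fdapply_const_mul ((dZ0.fun_pow 2).fun_add (dZ1.fun_pow 2)) _ _]
    rw [fdapply_add (dZ0.fun_pow 2) (dZ1.fun_pow 2) _]
    rw [fdapply_sq dZ0 _, fdapply_sq dZ1 _]
    rw [hDZ0 x, hDZ1 x, ← hZeq0 t x, ← hZeq1 t x]
    ring
  -- periodicity on the surface
  have hT1' : ∀ x : ℝ×ℝ, ((x.1 + L₁, x.2) : ℝ×ℝ) = x + (L₁, 0) := by
    intro x; simp [Prod.ext_iff]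
  have hT2' : ∀ x : ℝ×ℝ, ((x.1, x.2 + L₂) : ℝ×ℝ) = x + (0, L₂) := by
    intro x; simp [Prod.ext_iff]
  have pd2per1 : ∀ (f : ℝ × ℝ → ℝ), Differentiable ℝ f →
      (∀ x : ℝ×ℝ, f (x.1 + L₁, x.2) = f x) →
      ∀ (k : Fin 2) (x : ℝ×ℝ), pd2 k f (x.1 + L₁, x.2) = pd2 k f x := by
    intro f hf hper k x
    unfold pd2
    rw [hT1' x]
    exact fdapply_periodic hf _ (fun y => by rw [← hT1' y]; exact hper y) x _
  have pd2per2 : ∀ (f : ℝ × ℝ → ℝ), Differentiable ℝ f →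
      (∀ x : ℝ×ℝ, f (x.1, x.2 + L₂) = f x) →
      ∀ (k : Fin 2) (x : ℝ×ℝ), pd2 k f (x.1, x.2 + L₂) = pd2 k f x := by
    intro f hf hper k x
    unfold pd2
    rw [hT2' x]
    exact fdapply_periodic hf _ (fun y => by rw [← hT2' y]; exact hper y) x _
  have hζtper1 : ∀ x : ℝ×ℝ, ζ t (x.1 + L₁, x.2) = ζ t x := fun x => (hperζ t x).1
  have hζtper2 : ∀ x : ℝ×ℝ, ζ t (x.1, x.2 + L₂) = ζ t x := fun x => (hperζ t x).2
  have hG1per1 : ∀ x : ℝ×ℝ,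
      fderiv ℝ (fun tx : ℝ × (ℝ × ℝ) => ζ tx.1 tx.2) (t, (x.1 + L₁, x.2)) (1, 0)
      = fderiv ℝ (fun tx : ℝ × (ℝ × ℝ) => ζ tx.1 tx.2) (t, x) (1, 0) := by
    intro x
    have hTz : ∀ z : ℝ × (ℝ×ℝ), ((z.1, (z.2.1 + L₁, z.2.2)) : ℝ × (ℝ×ℝ))
        = z + ((0:ℝ), ((L₁,0) : ℝ×ℝ)) := by
      intro z; simp [Prod.ext_iff]
    have hperF : ∀ z : ℝ × (ℝ×ℝ),
        (fun tx : ℝ × (ℝ×ℝ) => ζ tx.1 tx.2) (z + ((0:ℝ), ((L₁,0) : ℝ×ℝ)))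
          = ζ z.1 z.2 := by
      intro z; rw [← hTz z]; exact (hperζ z.1 z.2).1
    have h := fdapply_periodic hζd _ hperF (t, x) (1,0)
    show fderiv ℝ (fun tx : ℝ × (ℝ × ℝ) => ζ tx.1 tx.2) (t, (x.1 + L₁, x.2)) (1, 0) = _
    rw [show ((t, (x.1 + L₁, x.2)) : ℝ × (ℝ×ℝ)) = (t,x) + ((0:ℝ), ((L₁,0) : ℝ×ℝ)) from
      hTz (t,x)]
    exact h
  have hG1per2 : ∀ x : ℝ×ℝ,
      fderiv ℝ (fun tx : ℝ × (ℝ × ℝ) => ζ tx.1 tx.2) (t, (x.1, x.2 + L₂)) (1, 0)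
      = fderiv ℝ (fun tx : ℝ × (ℝ × ℝ) => ζ tx.1 tx.2) (t, x) (1, 0) := by
    intro x
    have hTz : ∀ z : ℝ × (ℝ×ℝ), ((z.1, (z.2.1, z.2.2 + L₂)) : ℝ × (ℝ×ℝ))
        = z + ((0:ℝ), ((0,L₂) : ℝ×ℝ)) := by
      intro z; simp [Prod.ext_iff]
    have hperF : ∀ z : ℝ × (ℝ×ℝ),
        (fun tx : ℝ × (ℝ×ℝ) => ζ tx.1 tx.2) (z + ((0:ℝ), ((0,L₂) : ℝ×ℝ)))
          = ζ z.1 z.2 := by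
      intro z; rw [← hTz z]; exact (hperζ z.1 z.2).2
    have h := fdapply_periodic hζd _ hperF (t, x) (1,0)
    show fderiv ℝ (fun tx : ℝ × (ℝ × ℝ) => ζ tx.1 tx.2) (t, (x.1, x.2 + L₂)) (1, 0) = _
    rw [show ((t, (x.1, x.2 + L₂)) : ℝ × (ℝ×ℝ)) = (t,x) + ((0:ℝ), ((0,L₂) : ℝ×ℝ)) from
      hTz (t,x)]
    exact h
  -- surface pointwise identity and flux
  have dP0 : Differentiable ℝ (pd2 0 (ζ t)) := (contDiff_pd2 (hζt t) 0).differentiable (by norm_num)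
  have dP1 : Differentiable ℝ (pd2 1 (ζ t)) := (contDiff_pd2 (hζt t) 1).differentiable (by norm_num)
  have dG1 : Differentiable ℝ (fun x' : ℝ×ℝ =>
      fderiv ℝ (fun tx : ℝ × (ℝ × ℝ) => ζ tx.1 tx.2) (t, x') (1, 0)) :=
    hG1cd.differentiable (by norm_num)
  have hskey : ∀ x : ℝ×ℝ,
      ζ t x * (fderiv ℝ (fun tx : ℝ × (ℝ × ℝ) => ζ tx.1 tx.2) (t, x) (1, 0))
        + σ * (pd2 0 (ζ t) x * pd2 0 (fun x' : ℝ×ℝ =>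
              fderiv ℝ (fun tx : ℝ × (ℝ × ℝ) => ζ tx.1 tx.2) (t, x') (1, 0)) x
          + pd2 1 (ζ t) x * pd2 1 (fun x' : ℝ×ℝ =>
              fderiv ℝ (fun tx : ℝ × (ℝ × ℝ) => ζ tx.1 tx.2) (t, x') (1, 0)) x)
      = (ζ t x - σ * lap2 (ζ t) x) *
          (fderiv ℝ (fun tx : ℝ × (ℝ × ℝ) => ζ tx.1 tx.2) (t, x) (1, 0))
        + σ * (pd2 0 (fun y : ℝ×ℝ =>
              (fderiv ℝ (fun tx : ℝ × (ℝ × ℝ) => ζ tx.1 tx.2) (t, y) (1, 0))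
                * pd2 0 (ζ t) y) x
          + pd2 1 (fun y : ℝ×ℝ =>
              (fderiv ℝ (fun tx : ℝ × (ℝ × ℝ) => ζ tx.1 tx.2) (t, y) (1, 0))
                * pd2 1 (ζ t) y) x) := by
    intro x
    have e0 : pd2 0 (fun y : ℝ×ℝ =>
        (fderiv ℝ (fun tx : ℝ × (ℝ × ℝ) => ζ tx.1 tx.2) (t, y) (1, 0)) * pd2 0 (ζ t) y) x
        = pd2 0 (fun x' : ℝ×ℝ =>
            fderiv ℝ (fun tx : ℝ × (ℝ × ℝ) => ζ tx.1 tx.2) (t, x') (1, 0)) x * pd2 0 (ζ t) x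
          + (fderiv ℝ (fun tx : ℝ × (ℝ × ℝ) => ζ tx.1 tx.2) (t, x) (1, 0))
              * pd2 0 (pd2 0 (ζ t)) x := by
      rw [pd2_eq0, pd2_eq0, pd2_eq0]
      exact fdapply_mul (dG1 x) (dP0 x) _
    have e1 : pd2 1 (fun y : ℝ×ℝ =>
        (fderiv ℝ (fun tx : ℝ × (ℝ × ℝ) => ζ tx.1 tx.2) (t, y) (1, 0)) * pd2 1 (ζ t) y) x
        = pd2 1 (fun x' : ℝ×ℝ =>
            fderiv ℝ (fun tx : ℝ × (ℝ × ℝ) => ζ tx.1 tx.2) (t, x') (1, 0)) x * pd2 1 (ζ t) x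
          + (fderiv ℝ (fun tx : ℝ × (ℝ × ℝ) => ζ tx.1 tx.2) (t, x) (1, 0))
              * pd2 1 (pd2 1 (ζ t)) x := by
      rw [pd2_eq1, pd2_eq1, pd2_eq1]
      exact fdapply_mul (dG1 x) (dP1 x) _
    rw [e0, e1]
    simp only [lap2]
    ring
  -- continuity stock on the surface
  have cζt : Continuous (ζ t) := (hζt t).continuous
  have cP0 : Continuous (pd2 0 (ζ t)) := continuous_pd2 (hζt t) 0
  have clap : Continuous (lap2 (ζ t)) := by
    show Continuous fun x => pd2 0 (pd2 0 (ζ t)) x + pd2 1 (pd2 1 (ζ t)) x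
    exact (continuous_pd2 (contDiff_pd2 (hζt t) 0) 0).add
      (continuous_pd2 (contDiff_pd2 (hζt t) 1) 1)
  have cG1 : Continuous (fun x' : ℝ×ℝ =>
      fderiv ℝ (fun tx : ℝ × (ℝ × ℝ) => ζ tx.1 tx.2) (t, x') (1, 0)) := hG1cd.continuous
  have cvtop : ∀ i : Fin 3, Continuous fun x : ℝ×ℝ => v t (x, (0:ℝ)) i :=
    fun i => (cvt i).comp (continuous_id.prodMk continuous_const)
  have cΘ3t : ∀ i : Fin 3, Continuous fun x : ℝ×ℝ => Θ3 t x i :=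
    fun i => (hΘ3 i).comp (continuous_const.prodMk continuous_id)
  have cΘ4t : Continuous fun x : ℝ×ℝ => Θ4 t x :=
    hΘ4.comp (continuous_const.prodMk continuous_id)
  -- flux terms vanish
  have hfx0 : ∫ x in Set.Ioc 0 L₁ ×ˢ Set.Ioc 0 L₂,
      pd2 0 (fun y : ℝ×ℝ =>
        (fderiv ℝ (fun tx : ℝ × (ℝ × ℝ) => ζ tx.1 tx.2) (t, y) (1, 0))
          * pd2 0 (ζ t) y) x = 0 := by
    refine sflux0 h0L₁ (hG1cd.mul (contDiff_pd2 (hζt t) 0)) ?_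
    intro x
    rw [hG1per1 x, pd2per1 (ζ t) dζt hζtper1 0 x]
  have hfx1 : ∫ x in Set.Ioc 0 L₁ ×ˢ Set.Ioc 0 L₂,
      pd2 1 (fun y : ℝ×ℝ =>
        (fderiv ℝ (fun tx : ℝ × (ℝ × ℝ) => ζ tx.1 tx.2) (t, y) (1, 0))
          * pd2 1 (ζ t) y) x = 0 := by
    refine sflux1 h0L₂ (hG1cd.mul (contDiff_pd2 (hζt t) 1)) ?_
    intro x
    rw [hG1per2 x, pd2per2 (ζ t) dζt hζtper2 1 x]
  -- reduce the surface derivative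
  have intP : IntegrableOn (fun x : ℝ×ℝ => (ζ t x - σ * lap2 (ζ t) x) *
      (fderiv ℝ (fun tx : ℝ × (ℝ × ℝ) => ζ tx.1 tx.2) (t, x) (1, 0)))
      (Set.Ioc 0 L₁ ×ˢ Set.Ioc 0 L₂) :=
    integrableOn_B2 ((cζt.sub (continuous_const.mul clap)).mul cG1)
  have intF0 : IntegrableOn (fun x : ℝ×ℝ => pd2 0 (fun y : ℝ×ℝ =>
      (fderiv ℝ (fun tx : ℝ × (ℝ × ℝ) => ζ tx.1 tx.2) (t, y) (1, 0)) * pd2 0 (ζ t) y) x)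
      (Set.Ioc 0 L₁ ×ˢ Set.Ioc 0 L₂) :=
    integrableOn_B2 (continuous_pd2 (hG1cd.mul (contDiff_pd2 (hζt t) 0)) 0)
  have intF1 : IntegrableOn (fun x : ℝ×ℝ => pd2 1 (fun y : ℝ×ℝ =>
      (fderiv ℝ (fun tx : ℝ × (ℝ × ℝ) => ζ tx.1 tx.2) (t, y) (1, 0)) * pd2 1 (ζ t) y) x)
      (Set.Ioc 0 L₁ ×ˢ Set.Ioc 0 L₂) :=
    integrableOn_B2 (continuous_pd2 (hG1cd.mul (contDiff_pd2 (hζt t) 1)) 1)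
  have hSURF3 : HasDerivAt (fun τ => ∫ x' in Set.Ioc 0 L₁ ×ˢ Set.Ioc 0 L₂,
        (2⁻¹ * ζ τ x' ^ 2 + σ / 2 * (pd2 0 (ζ τ) x' ^ 2 + pd2 1 (ζ τ) x' ^ 2)))
      (∫ x in Set.Ioc 0 L₁ ×ˢ Set.Ioc 0 L₂, (ζ t x - σ * lap2 (ζ t) x) *
        (fderiv ℝ (fun tx : ℝ × (ℝ × ℝ) => ζ tx.1 tx.2) (t, x) (1, 0))) t := by
    have hcg : ∫ x in Set.Ioc 0 L₁ ×ˢ Set.Ioc 0 L₂,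
        fderiv ℝ (fun z : ℝ × (ℝ×ℝ) => 2⁻¹ * (ζ z.1 z.2)^2
          + σ/2 * ((fderiv ℝ (fun tx : ℝ × (ℝ × ℝ) => ζ tx.1 tx.2) z (0,(1,0)))^2
            + (fderiv ℝ (fun tx : ℝ × (ℝ × ℝ) => ζ tx.1 tx.2) z (0,(0,1)))^2)) (t, x) (1,0)
        = ∫ x in Set.Ioc 0 L₁ ×ˢ Set.Ioc 0 L₂,
          ((ζ t x - σ * lap2 (ζ t) x) *
            (fderiv ℝ (fun tx : ℝ × (ℝ × ℝ) => ζ tx.1 tx.2) (t, x) (1, 0))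
          + σ * (pd2 0 (fun y : ℝ×ℝ =>
              (fderiv ℝ (fun tx : ℝ × (ℝ × ℝ) => ζ tx.1 tx.2) (t, y) (1, 0))
                * pd2 0 (ζ t) y) x
            + pd2 1 (fun y : ℝ×ℝ =>
              (fderiv ℝ (fun tx : ℝ × (ℝ × ℝ) => ζ tx.1 tx.2) (t, y) (1, 0))
                * pd2 1 (ζ t) y) x)) :=
      setIntegral_congr_fun hB2m (fun x _ => (hGsapp x).trans (hskey x))
    have hsplit : ∫ x in Set.Ioc 0 L₁ ×ˢ Set.Ioc 0 L₂,
        ((ζ t x - σ * lap2 (ζ t) x) *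
            (fderiv ℝ (fun tx : ℝ × (ℝ × ℝ) => ζ tx.1 tx.2) (t, x) (1, 0))
          + σ * (pd2 0 (fun y : ℝ×ℝ =>
              (fderiv ℝ (fun tx : ℝ × (ℝ × ℝ) => ζ tx.1 tx.2) (t, y) (1, 0))
                * pd2 0 (ζ t) y) x
            + pd2 1 (fun y : ℝ×ℝ =>
              (fderiv ℝ (fun tx : ℝ × (ℝ × ℝ) => ζ tx.1 tx.2) (t, y) (1, 0))
                * pd2 1 (ζ t) y) x))
        = ∫ x in Set.Ioc 0 L₁ ×ˢ Set.Ioc 0 L₂, ((ζ t x - σ * lap2 (ζ t) x) *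
            (fderiv ℝ (fun tx : ℝ × (ℝ × ℝ) => ζ tx.1 tx.2) (t, x) (1, 0))) := by
      have h7 := MeasureTheory.integral_add
        (μ := volume.restrict (Set.Ioc 0 L₁ ×ˢ Set.Ioc 0 L₂)) intP
        ((intF0.add intF1).const_mul σ)
      have h8 := MeasureTheory.integral_add
        (μ := volume.restrict (Set.Ioc 0 L₁ ×ˢ Set.Ioc 0 L₂)) intF0 intF1
      simp only [Pi.add_apply] at h7 h8
      rw [h7, MeasureTheory.integral_const_mul σ _, h8, hfx0, hfx1]
      ring
    rw [hcg, hsplit] at hSURF2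
    exact hSURF2
  -- kinematic boundary condition
  have hkin' : ∀ x' ∈ Set.Ioc (0:ℝ) L₁ ×ˢ Set.Ioc (0:ℝ) L₂,
      fderiv ℝ (fun tx : ℝ × (ℝ × ℝ) => ζ tx.1 tx.2) (t, x') (1, 0)
        = v t (x', (0:ℝ)) 2 - γ / 2 * pd2 0 (ζ t) x' + Θ4 t x' := by
    intro x' hx'
    have hD2 : deriv (fun τ => ζ τ x') t
        = fderiv ℝ (fun tx : ℝ × (ℝ × ℝ) => ζ tx.1 tx.2) (t, x') (1, 0) :=
      (hasDerivAt_slice_left (fun tx : ℝ × (ℝ × ℝ) => ζ tx.1 tx.2) (hζd (t,x'))).deriv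
    rw [← hD2, hkin t x' hx']
  -- the two remaining flux identities
  have hfluxA : ∫ x in Set.Ioc 0 L₁ ×ˢ Set.Ioc 0 L₂, ζ t x * pd2 0 (ζ t) x = 0 := by
    have h := sflux0 (L₂ := L₂) h0L₁ (contDiff_const.mul ((hζt t).pow 2) :
        ContDiff ℝ (⊤:ℕ∞) fun y : ℝ×ℝ => 2⁻¹ * (ζ t y)^2)
      (fun x => by rw [hζtper1 x])
    refine Eq.trans (setIntegral_congr_fun hB2m (fun x _ => ?_)) h
    rw [pd2_eq0, pd2_eq0, fdapply_const_mul ((dζt x).fun_pow 2) _ _, fdapply_sq (dζt x)]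
    ring
  have hswapF : ∀ x : ℝ×ℝ,
      fderiv ℝ (pd2 0 (ζ t)) x (0,1) = fderiv ℝ (pd2 1 (ζ t)) x (1,0) := by
    intro x
    exact fdapply_symm (hζt t) x (1,0) (0,1)
  have hBkey : ∀ x : ℝ×ℝ, lap2 (ζ t) x * pd2 0 (ζ t) x
      = pd2 0 (fun y => pd2 0 (ζ t) y * pd2 0 (ζ t) y) x
        + pd2 1 (fun y => pd2 1 (ζ t) y * pd2 0 (ζ t) y) x
        - pd2 0 (fun y => 2⁻¹ * ((pd2 0 (ζ t) y)^2 + (pd2 1 (ζ t) y)^2)) x := by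
    intro x
    rw [pd2_eq0 (fun y => pd2 0 (ζ t) y * pd2 0 (ζ t) y),
      pd2_eq1 (fun y => pd2 1 (ζ t) y * pd2 0 (ζ t) y),
      pd2_eq0 (fun y => 2⁻¹ * ((pd2 0 (ζ t) y)^2 + (pd2 1 (ζ t) y)^2))]
    rw [fdapply_mul (dP0 x) (dP0 x) _, fdapply_mul (dP1 x) (dP0 x) _,
      fdapply_const_mul (((dP0 x).fun_pow 2).fun_add ((dP1 x).fun_pow 2)) _ _,
      fdapply_add ((dP0 x).fun_pow 2) ((dP1 x).fun_pow 2) _,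
      fdapply_sq (dP0 x) _, fdapply_sq (dP1 x) _]
    simp only [lap2]
    rw [pd2_eq0 (pd2 0 (ζ t)), pd2_eq1 (pd2 1 (ζ t))]
    rw [hswapF x]
    ring
  have hfluxB : ∫ x in Set.Ioc 0 L₁ ×ˢ Set.Ioc 0 L₂, lap2 (ζ t) x * pd2 0 (ζ t) x = 0 := by
    have hz0 : ∫ x in Set.Ioc 0 L₁ ×ˢ Set.Ioc 0 L₂,
        pd2 0 (fun y => pd2 0 (ζ t) y * pd2 0 (ζ t) y) x = 0 := by
      refine sflux0 h0L₁ ((contDiff_pd2 (hζt t) 0).mul (contDiff_pd2 (hζt t) 0)) ?_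
      intro x
      rw [pd2per1 (ζ t) dζt hζtper1 0 x]
    have hz1 : ∫ x in Set.Ioc 0 L₁ ×ˢ Set.Ioc 0 L₂,
        pd2 1 (fun y => pd2 1 (ζ t) y * pd2 0 (ζ t) y) x = 0 := by
      refine sflux1 h0L₂ ((contDiff_pd2 (hζt t) 1).mul (contDiff_pd2 (hζt t) 0)) ?_
      intro x
      rw [pd2per2 (ζ t) dζt hζtper2 0 x, pd2per2 (ζ t) dζt hζtper2 1 x]
    have hz2 : ∫ x in Set.Ioc 0 L₁ ×ˢ Set.Ioc 0 L₂,
        pd2 0 (fun y => 2⁻¹ * ((pd2 0 (ζ t) y)^2 + (pd2 1 (ζ t) y)^2)) x = 0 := by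
      refine sflux0 h0L₁ (contDiff_const.mul (((contDiff_pd2 (hζt t) 0).pow 2).add
        ((contDiff_pd2 (hζt t) 1).pow 2))) ?_
      intro x
      rw [pd2per1 (ζ t) dζt hζtper1 0 x, pd2per1 (ζ t) dζt hζtper1 1 x]
    have hintz0 : IntegrableOn (fun x : ℝ×ℝ =>
        pd2 0 (fun y => pd2 0 (ζ t) y * pd2 0 (ζ t) y) x) (Set.Ioc 0 L₁ ×ˢ Set.Ioc 0 L₂) :=
      integrableOn_B2 (continuous_pd2 ((contDiff_pd2 (hζt t) 0).mul (contDiff_pd2 (hζt t) 0)) 0)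
    have hintz1 : IntegrableOn (fun x : ℝ×ℝ =>
        pd2 1 (fun y => pd2 1 (ζ t) y * pd2 0 (ζ t) y) x) (Set.Ioc 0 L₁ ×ˢ Set.Ioc 0 L₂) :=
      integrableOn_B2 (continuous_pd2 ((contDiff_pd2 (hζt t) 1).mul (contDiff_pd2 (hζt t) 0)) 1)
    have hintz2 : IntegrableOn (fun x : ℝ×ℝ =>
        pd2 0 (fun y => 2⁻¹ * ((pd2 0 (ζ t) y)^2 + (pd2 1 (ζ t) y)^2)) x)
        (Set.Ioc 0 L₁ ×ˢ Set.Ioc 0 L₂) :=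
      integrableOn_B2 (continuous_pd2 (contDiff_const.mul (((contDiff_pd2 (hζt t) 0).pow 2).add
        ((contDiff_pd2 (hζt t) 1).pow 2))) 0)
    have hc := setIntegral_congr_fun (μ := volume) hB2m (fun x _ => hBkey x)
    rw [hc]
    have h9 := MeasureTheory.integral_sub
      (μ := volume.restrict (Set.Ioc 0 L₁ ×ˢ Set.Ioc 0 L₂)) (hintz0.add hintz1) hintz2
    have h10 := MeasureTheory.integral_add
      (μ := volume.restrict (Set.Ioc 0 L₁ ×ˢ Set.Ioc 0 L₂)) hintz0 hintz1
    simp only [Pi.add_apply, Pi.sub_apply] at h9 h10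
    rw [h9, h10, hz0, hz1, hz2]
    ring
  -- integrability on the surface
  have intS1 : IntegrableOn (fun x' : ℝ×ℝ =>
      (ζ t x' - σ * lap2 (ζ t) x') * v t (x',(0:ℝ)) 2) (Set.Ioc 0 L₁ ×ˢ Set.Ioc 0 L₂) :=
    integrableOn_B2 ((cζt.sub (continuous_const.mul clap)).mul (cvtop 2))
  have intS2 : IntegrableOn (fun x' : ℝ×ℝ =>
      (ζ t x' - σ * lap2 (ζ t) x') * Θ4 t x') (Set.Ioc 0 L₁ ×ˢ Set.Ioc 0 L₂) :=
    integrableOn_B2 ((cζt.sub (continuous_const.mul clap)).mul cΘ4t)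
  have intI2 : IntegrableOn (fun x' : ℝ×ℝ =>
      γ * ζ t x' * v t (x',(0:ℝ)) 0) (Set.Ioc 0 L₁ ×ˢ Set.Ioc 0 L₂) :=
    integrableOn_B2 ((continuous_const.mul cζt).mul (cvtop 0))
  have intΘ3v : IntegrableOn (fun x' : ℝ×ℝ =>
      ∑ i : Fin 3, Θ3 t x' i * v t (x',(0:ℝ)) i) (Set.Ioc 0 L₁ ×ˢ Set.Ioc 0 L₂) :=
    integrableOn_B2 (continuous_finset_sum _ fun i _ => (cΘ3t i).mul (cvtop i))
  have intZP0 : IntegrableOn (fun x : ℝ×ℝ => ζ t x * pd2 0 (ζ t) x)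
      (Set.Ioc 0 L₁ ×ˢ Set.Ioc 0 L₂) := integrableOn_B2 (cζt.mul cP0)
  have intLP0 : IntegrableOn (fun x : ℝ×ℝ => lap2 (ζ t) x * pd2 0 (ζ t) x)
      (Set.Ioc 0 L₁ ×ˢ Set.Ioc 0 L₂) := integrableOn_B2 (clap.mul cP0)
  have hSURF4 : HasDerivAt (fun τ => ∫ x' in Set.Ioc 0 L₁ ×ˢ Set.Ioc 0 L₂,
        (2⁻¹ * ζ τ x' ^ 2 + σ / 2 * (pd2 0 (ζ τ) x' ^ 2 + pd2 1 (ζ τ) x' ^ 2)))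
      ((∫ x' in Set.Ioc 0 L₁ ×ˢ Set.Ioc 0 L₂, (ζ t x' - σ * lap2 (ζ t) x') * v t (x',(0:ℝ)) 2)
        + ∫ x' in Set.Ioc 0 L₁ ×ˢ Set.Ioc 0 L₂, (ζ t x' - σ * lap2 (ζ t) x') * Θ4 t x') t := by
    have hc2 : ∫ x in Set.Ioc 0 L₁ ×ˢ Set.Ioc 0 L₂, ((ζ t x - σ * lap2 (ζ t) x) *
          (fderiv ℝ (fun tx : ℝ × (ℝ × ℝ) => ζ tx.1 tx.2) (t, x) (1, 0)))
        = ∫ x' in Set.Ioc 0 L₁ ×ˢ Set.Ioc 0 L₂,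
            ((ζ t x' - σ * lap2 (ζ t) x') * v t (x',(0:ℝ)) 2
              + (ζ t x' - σ * lap2 (ζ t) x') * Θ4 t x'
              + (-(γ/2)) * (ζ t x' * pd2 0 (ζ t) x')
              + (σ*(γ/2)) * (lap2 (ζ t) x' * pd2 0 (ζ t) x')) := by
      refine setIntegral_congr_fun hB2m (fun x hx => ?_)
      rw [hkin' x hx]; ring
    have h11 := MeasureTheory.integral_add
      (μ := volume.restrict (Set.Ioc 0 L₁ ×ˢ Set.Ioc 0 L₂))
      (((intS1.add intS2).add (intZP0.const_mul (-(γ/2)))))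
      (intLP0.const_mul (σ*(γ/2)))
    have h12 := MeasureTheory.integral_add
      (μ := volume.restrict (Set.Ioc 0 L₁ ×ˢ Set.Ioc 0 L₂))
      (intS1.add intS2) (intZP0.const_mul (-(γ/2)))
    have h13 := MeasureTheory.integral_add
      (μ := volume.restrict (Set.Ioc 0 L₁ ×ˢ Set.Ioc 0 L₂)) intS1 intS2
    simp only [Pi.add_apply] at h11 h12 h13
    have hval : ∫ x' in Set.Ioc 0 L₁ ×ˢ Set.Ioc 0 L₂,
        ((ζ t x' - σ * lap2 (ζ t) x') * v t (x',(0:ℝ)) 2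
          + (ζ t x' - σ * lap2 (ζ t) x') * Θ4 t x'
          + (-(γ/2)) * (ζ t x' * pd2 0 (ζ t) x')
          + (σ*(γ/2)) * (lap2 (ζ t) x' * pd2 0 (ζ t) x'))
        = (∫ x' in Set.Ioc 0 L₁ ×ˢ Set.Ioc 0 L₂,
            (ζ t x' - σ * lap2 (ζ t) x') * v t (x',(0:ℝ)) 2)
          + ∫ x' in Set.Ioc 0 L₁ ×ˢ Set.Ioc 0 L₂, (ζ t x' - σ * lap2 (ζ t) x') * Θ4 t x' := by
      rw [h11, h12, h13, MeasureTheory.integral_const_mul (-(γ/2)) _,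
        MeasureTheory.integral_const_mul (σ*(γ/2)) _, hfluxA, hfluxB]
      ring
    have h := hSURF3
    rw [hc2, hval] at h
    exact h
  -- final assembly
  have hsum := hVOL4.add hSURF4
  have hTWs : ∫ x' in Set.Ioc 0 L₁ ×ˢ Set.Ioc 0 L₂,
      ((ζ t x' - σ * lap2 (ζ t) x') * v t (x',(0:ℝ)) 2 - γ * ζ t x' * v t (x',(0:ℝ)) 0
        + ∑ i : Fin 3, Θ3 t x' i * v t (x',(0:ℝ)) i)
      = (∫ x' in Set.Ioc 0 L₁ ×ˢ Set.Ioc 0 L₂,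
          (ζ t x' - σ * lap2 (ζ t) x') * v t (x',(0:ℝ)) 2)
        - (∫ x' in Set.Ioc 0 L₁ ×ˢ Set.Ioc 0 L₂, γ * ζ t x' * v t (x',(0:ℝ)) 0)
        + ∫ x' in Set.Ioc 0 L₁ ×ˢ Set.Ioc 0 L₂, ∑ i : Fin 3, Θ3 t x' i * v t (x',(0:ℝ)) i := by
    have h14 := MeasureTheory.integral_add
      (μ := volume.restrict (Set.Ioc 0 L₁ ×ˢ Set.Ioc 0 L₂)) (intS1.sub intI2) intΘ3v
    have h15 := MeasureTheory.integral_sub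
      (μ := volume.restrict (Set.Ioc 0 L₁ ×ˢ Set.Ioc 0 L₂)) intS1 intI2
    simp only [Pi.add_apply, Pi.sub_apply] at h14 h15
    rw [h14, h15]
  have hI4s : ∫ x' in Set.Ioc 0 L₁ ×ˢ Set.Ioc 0 L₂,
      (-(∑ i : Fin 3, Θ3 t x' i * v t (x',(0:ℝ)) i) + (ζ t x' - σ * lap2 (ζ t) x') * Θ4 t x')
      = -(∫ x' in Set.Ioc 0 L₁ ×ˢ Set.Ioc 0 L₂, ∑ i : Fin 3, Θ3 t x' i * v t (x',(0:ℝ)) i)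
        + ∫ x' in Set.Ioc 0 L₁ ×ˢ Set.Ioc 0 L₂, (ζ t x' - σ * lap2 (ζ t) x') * Θ4 t x' := by
    have h16 := MeasureTheory.integral_add
      (μ := volume.restrict (Set.Ioc 0 L₁ ×ˢ Set.Ioc 0 L₂)) intΘ3v.neg intS2
    simp only [Pi.add_apply, Pi.neg_apply] at h16
    rw [h16, MeasureTheory.integral_neg]
  refine hsum.congr_deriv ?_
  rw [hI4s, hTW, hTWs]
  ring
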